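/- arXiv:1406.3807 — 7 statements merged into one kernel-verified Lean document; each statement's English description precedes it below -/
import Mathlib

section
/- Let Y ⊆ ℝ^d be a Danzer set, i.e. Y intersects every convex subset of ℝ^d of volume 1. Then Y is a dense forest: there is a function ε(T) → 0 as T → ∞ such that for every point x ∈ ℝ^d and every unit vector v, there exist t ∈ [0,T] and y ∈ Y with ‖x + t·v − y‖ < ε(T). In fact one may take ε(T) = C·T^{-1/(d-1)} for a suitable constant C depending only on d. -/
open MeasureTheory Set

/-- A Danzer set is a dense forest with ε(T) = C·T^(-1/(d-1)). -/
theorem danzer_is_dense_forest (d : ℕ) (hd : 2 ≤ d)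
    (Y : Set (EuclideanSpace ℝ (Fin d)))
    (hY : ∀ K : Set (EuclideanSpace ℝ (Fin d)),
      Convex ℝ K → volume K = 1 → (Y ∩ K).Nonempty) :
    ∃ C : ℝ, 0 < C ∧ ∀ T : ℝ, 0 < T →
      ∀ x v : EuclideanSpace ℝ (Fin d), ‖v‖ = 1 →
        ∃ t ∈ Set.Icc (0:ℝ) T, ∃ y ∈ Y,
          ‖x + t • v - y‖ < C * T ^ (-(1:ℝ) / (d - 1)) := by
  classical
  have hd0 : 0 < d := by omega
  haveI : NeZero d := ⟨by omega⟩
  refine ⟨d, by positivity, ?_⟩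
  intro T hT x v hv
  set s : ℝ := T ^ (-(1:ℝ) / (d - 1)) / 2 with hs_def
  have hd1 : (1:ℝ) ≤ (d:ℝ) - 1 := by
    have : (2:ℝ) ≤ d := by exact_mod_cast hd
    linarith
  have hrpow_pos : 0 < T ^ (-(1:ℝ) / (d - 1)) := Real.rpow_pos_of_pos hT _
  have hs_pos : 0 < s := by positivity
  -- orthonormal basis with b 0 = v
  have hcard : Module.finrank ℝ (EuclideanSpace ℝ (Fin d)) = Fintype.card (Fin d) := by
    simp [finrank_euclideanSpace]
  have horth : Orthonormal ℝ (({0} : Set (Fin d)).restrict (fun _ : Fin d => v)) := by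
    constructor
    · intro i; exact hv
    · intro i j hij
      exact absurd (Subtype.ext ((mem_singleton_iff.mp i.2).trans
        (mem_singleton_iff.mp j.2).symm)) hij
  obtain ⟨b, hb⟩ := horth.exists_orthonormalBasis_extension_of_card_eq hcard
  have hb0 : b 0 = v := hb 0 (mem_singleton _)
  set f := b.repr.symm with hf_def
  -- the box
  set B : Set (EuclideanSpace ℝ (Fin d)) :=
    WithLp.ofLp ⁻¹' Set.univ.pi (fun i : Fin d => if i = 0 then Icc (0:ℝ) T else Icc (-s) s) with hB_def
  have hBconv : Convex ℝ B := by
    apply Convex.linear_preimage (f := (WithLp.linearEquiv 2 ℝ (Fin d → ℝ)).toLinearMap)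
    apply convex_pi
    intro i _
    split <;> exact convex_Icc _ _
  have hBmeas : MeasurableSet B := by
    refine MeasurableSet.preimage ?_ (by fun_prop)
    apply MeasurableSet.univ_pi
    intro i
    split <;> exact measurableSet_Icc
  -- volume of B
  have h2s : 2 * s = T ^ (-(1:ℝ) / (d - 1)) := by rw [hs_def]; ring
  have hprod : T * (2 * s) ^ (d - 1) = 1 := by
    rw [h2s, ← Real.rpow_natCast (T ^ (-(1:ℝ) / (d - 1))) (d - 1),
      ← Real.rpow_mul hT.le]
    have hcast : ((d - 1 : ℕ) : ℝ) = (d : ℝ) - 1 := by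
      have : 1 ≤ d := by omega
      push_cast [this]; ring
    rw [hcast]
    have hne : (d : ℝ) - 1 ≠ 0 := by linarith
    have : -(1:ℝ) / ((d:ℝ) - 1) * ((d:ℝ) - 1) = -1 := by field_simp
    rw [this, Real.rpow_neg_one, mul_inv_cancel₀ hT.ne']
  have hvolB : volume B = 1 := by
    have hpre : (MeasurableEquiv.toLp 2 (Fin d → ℝ)).symm ⁻¹'
        (Set.univ.pi (fun i : Fin d => if i = 0 then Icc (0:ℝ) T else Icc (-s) s)) = B := rfl
    have h1 : volume B = volume
        (Set.univ.pi (fun i : Fin d => if i = 0 then Icc (0:ℝ) T else Icc (-s) s)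
          : Set (Fin d → ℝ)) := by
      rw [← hpre]
      exact (EuclideanSpace.volume_preserving_symm_measurableEquiv_toLp (Fin d)).measure_preimage
        ((MeasurableSet.univ_pi (fun i => by
          split <;> exact measurableSet_Icc)).nullMeasurableSet)
    rw [h1, volume_pi_pi]
    have hterm : ∀ i : Fin d, volume (if i = 0 then Icc (0:ℝ) T else Icc (-s) s)
        = if i = 0 then ENNReal.ofReal T else ENNReal.ofReal (2 * s) := by
      intro i
      split
      · rw [Real.volume_Icc]; norm_num
      · rw [Real.volume_Icc]; ring_nf
    rw [Finset.prod_congr rfl (fun i _ => hterm i),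
      ← Finset.mul_prod_erase Finset.univ _ (Finset.mem_univ (0 : Fin d))]
    rw [if_pos rfl]
    have hrest : ∀ i ∈ Finset.univ.erase (0 : Fin d),
        (if i = 0 then ENNReal.ofReal T else ENNReal.ofReal (2 * s))
          = ENNReal.ofReal (2 * s) := by
      intro i hi
      rw [if_neg (Finset.ne_of_mem_erase hi)]
    rw [Finset.prod_congr rfl hrest, Finset.prod_const,
      Finset.card_erase_of_mem (Finset.mem_univ _)]
    simp only [Finset.card_univ, Fintype.card_fin]
    rw [← ENNReal.ofReal_pow (by positivity), ← ENNReal.ofReal_mul hT.le, hprod]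
    simp
  -- the convex set K
  set K : Set (EuclideanSpace ℝ (Fin d)) := (fun z => x + f z) '' B with hK_def
  have hKim : K = (fun z => x + z) '' (f '' B) := by
    rw [hK_def, Set.image_image]
  have hKconv : Convex ℝ K := by
    rw [hKim]
    exact (hBconv.linear_image (f.toLinearEquiv : _ →ₗ[ℝ] _)).translate x
  have hKvol : volume K = 1 := by
    rw [hKim, Set.image_add_left, measure_preimage_add]
    have : f '' B = f.symm ⁻¹' B := f.toEquiv.image_eq_preimage_symm B
    rw [this, hf_def, LinearIsometryEquiv.symm_symm]
    rw [b.measurePreserving_repr.measure_preimage hBmeas.nullMeasurableSet]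
    exact hvolB
  obtain ⟨y, hyY, hyK⟩ := hY K hKconv hKvol
  obtain ⟨z, hzB, hzy⟩ := hyK
  have hz := fun i => (Set.mem_univ_pi.mp hzB) i
  have hz0 : z 0 ∈ Icc (0:ℝ) T := by simpa using hz 0
  refine ⟨z 0, hz0, y, hyY, ?_⟩
  -- compute the distance
  set w : EuclideanSpace ℝ (Fin d) := z - (z 0) • EuclideanSpace.single (0 : Fin d) (1:ℝ)
    with hw_def
  have hfz : f z = f w + (z 0) • v := by
    rw [hw_def]
    simp only [map_sub, _root_.map_smul]
    rw [hf_def, b.repr_symm_single, hb0]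
    abel
  have hzy' : x + f z = y := hzy
  have hdist : x + (z 0) • v - y = -(f w) := by
    rw [← hzy', hfz]; abel
  rw [hdist, norm_neg, f.norm_map]
  -- bound ‖w‖
  have hwi : ∀ i : Fin d, ‖w i‖ ^ 2 ≤ s ^ 2 := by
    intro i
    rw [hw_def]
    by_cases hi : i = 0
    · subst hi
      simp only [PiLp.sub_apply, PiLp.smul_apply, EuclideanSpace.single_apply,
        eq_self_iff_true, if_true, smul_eq_mul, mul_one, sub_self, norm_zero]
      nlinarith [hs_pos]
    · have hzi : z i ∈ Icc (-s) s := by simpa [hi] using hz i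
      simp only [PiLp.sub_apply, PiLp.smul_apply, EuclideanSpace.single_apply,
        if_neg hi, smul_eq_mul, mul_zero, sub_zero, Real.norm_eq_abs, sq_abs]
      exact sq_le_sq' hzi.1 hzi.2
  have hnorm : ‖w‖ ≤ Real.sqrt d * s := by
    rw [EuclideanSpace.norm_eq]
    have hsum : ∑ i : Fin d, ‖w i‖ ^ 2 ≤ (d : ℝ) * s ^ 2 := by
      calc ∑ i : Fin d, ‖w i‖ ^ 2 ≤ ∑ _i : Fin d, s ^ 2 :=
            Finset.sum_le_sum (fun i _ => hwi i)
        _ = (d : ℝ) * s ^ 2 := by simp [mul_comm]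
    calc Real.sqrt (∑ i : Fin d, ‖w i‖ ^ 2) ≤ Real.sqrt ((d : ℝ) * s ^ 2) :=
          Real.sqrt_le_sqrt hsum
      _ = Real.sqrt d * s := by
          rw [Real.sqrt_mul (by positivity), Real.sqrt_sq hs_pos.le]
  have h1d : (1:ℝ) ≤ (d:ℝ) := by linarith
  have hsqrt : Real.sqrt d ≤ (d : ℝ) := by
    calc Real.sqrt d ≤ Real.sqrt ((d:ℝ)^2) := Real.sqrt_le_sqrt (by nlinarith)
      _ = (d:ℝ) := Real.sqrt_sq (by positivity)
  calc ‖w‖ ≤ Real.sqrt d * s := hnorm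
    _ ≤ (d : ℝ) * s := mul_le_mul_of_nonneg_right hsqrt hs_pos.le
    _ < (d : ℝ) * T ^ (-(1:ℝ) / (d - 1)) := by
        apply mul_lt_mul_of_pos_left _ (by positivity)
        rw [← h2s]; linarith
end

section
/- A set Y ⊆ ℝ^d is a dilate of a Danzer set (i.e. there exists c > 0 such that cY intersects every convex set of volume 1) if and only if there exists T > 0 such that for every g ∈ ASL_d(ℝ) (affine volume-preserving orientation-preserving map), the image gY intersects the Euclidean ball B(0,T). -/
open MeasureTheory Set Metric Pointwise
open scoped Matrix

namespace DanzerAux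

variable {d : ℕ}

noncomputable def ptsMat (p0 : EuclideanSpace ℝ (Fin d)) (v : Fin d → EuclideanSpace ℝ (Fin d)) :
    Matrix (Fin d) (Fin d) ℝ := Matrix.of fun i j => (v j - p0) i

theorem det_toEuclideanLin (M : Matrix (Fin d) (Fin d) ℝ) :
    LinearMap.det (Matrix.toEuclideanLin M) = M.det := by
  rw [Matrix.toEuclideanLin_eq_toLin]
  exact LinearMap.det_toLin _ M

theorem euclid_sum_apply {n : ℕ} (w : Fin n → ℝ) (u : Fin n → EuclideanSpace ℝ (Fin d)) (i : Fin d) :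
    (∑ j, w j • u j) i = ∑ j, w j * u j i := by
  induction (Finset.univ : Finset (Fin n)) using Finset.induction_on with
  | empty => simp
  | @insert a s h ih => rw [Finset.sum_insert h, Finset.sum_insert h, ← ih]; rfl

theorem coord_le_norm (u : EuclideanSpace ℝ (Fin d)) (j : Fin d) : |u j| ≤ ‖u‖ := by
  rw [EuclideanSpace.norm_eq]
  have h1 : |u j| = Real.sqrt (‖u j‖ ^ 2) := by
    rw [Real.sqrt_sq_eq_abs, Real.norm_eq_abs, abs_abs]
  rw [h1]
  apply Real.sqrt_le_sqrt
  exact Finset.single_le_sum (f := fun i => ‖u i‖^2) (fun i _ => by positivity)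
    (Finset.mem_univ j)

theorem box_volume (r : ℝ) :
    volume {t : EuclideanSpace ℝ (Fin d) | ∀ i, |t i| ≤ r} = (ENNReal.ofReal (2 * r))^d := by
  have : {t : EuclideanSpace ℝ (Fin d) | ∀ i, |t i| ≤ r} =
      ((MeasurableEquiv.toLp 2 (Fin d → ℝ)).symm) ⁻¹' (Set.univ.pi fun _ => Icc (-r) r) := by
    ext t
    simp only [Set.mem_setOf_eq, Set.mem_preimage, Set.mem_pi, Set.mem_univ, forall_true_left,
      Set.mem_Icc, abs_le]
    rfl
  rw [this, MeasurePreserving.measure_preimage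
    (EuclideanSpace.volume_preserving_symm_measurableEquiv_toLp (Fin d))
    (MeasurableSet.univ_pi fun _ => measurableSet_Icc).nullMeasurableSet]
  rw [volume_pi_pi]
  simp only [Real.volume_Icc, Finset.prod_const, Finset.card_univ, Fintype.card_fin]
  congr 1
  ring

theorem exists_det_ne_zero (K : Set (EuclideanSpace ℝ (Fin d))) (hK : volume K ≠ 0) :
    ∃ p0 ∈ K, ∃ v : Fin d → EuclideanSpace ℝ (Fin d), (∀ i, v i ∈ K) ∧ (ptsMat p0 v).det ≠ 0 := by
  obtain ⟨p0, hp0⟩ : K.Nonempty := nonempty_of_measure_ne_zero hK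
  set t : Set (EuclideanSpace ℝ (Fin d)) := (fun x => x - p0) '' K with ht
  by_cases htop : Submodule.span ℝ t = ⊤
  · obtain ⟨b, hbt, hbspan, hbli⟩ := exists_linearIndependent ℝ t
    rw [htop] at hbspan
    haveI : Fintype b := (hbli.setFinite).fintype
    set B : Module.Basis b ℝ (EuclideanSpace ℝ (Fin d)) :=
      Module.Basis.mk hbli (by rw [Subtype.range_coe, hbspan])
    have hcard : Fintype.card b = d := by
      have := Module.finrank_eq_card_basis B
      rw [finrank_euclideanSpace_fin] at this
      omega
    set e : Fin d ≃ b := (Fintype.equivFinOfCardEq hcard).symm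
    have hve : ∀ i : Fin d, ∃ k ∈ K, k - p0 = (e i : EuclideanSpace ℝ (Fin d)) := by
      intro i
      have : (e i : EuclideanSpace ℝ (Fin d)) ∈ t := hbt (e i).2
      obtain ⟨k, hk, hk2⟩ := this
      exact ⟨k, hk, hk2⟩
    choose v hvK hvp using hve
    refine ⟨p0, hp0, v, hvK, ?_⟩
    intro hdet0
    obtain ⟨w, hw0, hww⟩ := (Matrix.exists_mulVec_eq_zero_iff).2 hdet0
    have hli := hbli.comp e e.injective
    rw [Fintype.linearIndependent_iff] at hli
    have : ∀ j, w j = 0 := by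
      apply hli w
      have hcoord : ∀ i, (∑ j, w j • ((e j : EuclideanSpace ℝ (Fin d)))) i = 0 := by
        intro i
        rw [euclid_sum_apply]
        have := congrFun hww i
        simp only [Matrix.mulVec, dotProduct, ptsMat, Matrix.of_apply, Pi.zero_apply] at this
        rw [← this]
        apply Finset.sum_congr rfl
        intro j _
        rw [← hvp j]
        have : (v j - p0) i = v j i - p0 i := rfl
        rw [this, mul_comm]
      exact PiLp.ext hcoord
    exact hw0 (funext this)
  · exfalso
    apply hK
    have hsub : K ⊆ p0 +ᵥ (Submodule.span ℝ t : Set (EuclideanSpace ℝ (Fin d))) := by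
      intro k hk
      refine ⟨k - p0, Submodule.subset_span ⟨k, hk, rfl⟩, ?_⟩
      show p0 + (k - p0) = k
      abel
    have h0 : volume (p0 +ᵥ (Submodule.span ℝ t : Set (EuclideanSpace ℝ (Fin d)))) = 0 := by
      rw [measure_vadd]
      exact Measure.addHaar_submodule volume _ htop
    exact measure_mono_null hsub h0

theorem slab_bound (K : Set (EuclideanSpace ℝ (Fin d))) (p0 : EuclideanSpace ℝ (Fin d))
    (v : Fin d → EuclideanSpace ℝ (Fin d)) (D : ℝ)
    (hΔ : (ptsMat p0 v).det ≠ 0)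
    (hD : ∀ x ∈ K, ∀ i, |((ptsMat p0 v).updateCol i (fun r => x r - p0 r)).det| ≤ D) :
    volume K ≤ ENNReal.ofReal |(ptsMat p0 v).det| *
      (ENNReal.ofReal (2 * (D / |(ptsMat p0 v).det|)))^d := by
  set M := ptsMat p0 v with hM
  set Δ := M.det with hΔdef
  set r : ℝ := D / |Δ| with hr
  set Box : Set (EuclideanSpace ℝ (Fin d)) := {t | ∀ i, |t i| ≤ r} with hBox
  have hsub : K ⊆ p0 +ᵥ (Matrix.toEuclideanLin M) '' Box := by
    intro x hx
    set w : Fin d → ℝ := fun i => x i - p0 i with hw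
    set t : Fin d → ℝ := M⁻¹ *ᵥ w with htdef
    have htB : ∀ i, |t i| ≤ r := by
      intro i
      have h1 : t i = Δ⁻¹ * (M.updateCol i w).det := by
        rw [htdef, Matrix.inv_def, Matrix.smul_mulVec, ← Matrix.cramer_eq_adjugate_mulVec,
          Ring.inverse_eq_inv]
        simp only [Pi.smul_apply, smul_eq_mul, Matrix.cramer_apply]
        rfl
      rw [h1, abs_mul, abs_inv, hr]
      rw [div_eq_inv_mul]
      exact mul_le_mul_of_nonneg_left (hD x hx i) (by positivity)
    refine ⟨Matrix.toEuclideanLin M (WithLp.toLp 2 t), ⟨WithLp.toLp 2 t, htB, rfl⟩, ?_⟩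
    have hMt : M *ᵥ t = w := by
      rw [htdef, Matrix.mulVec_mulVec, Matrix.mul_nonsing_inv M (isUnit_iff_ne_zero.2 hΔ),
        Matrix.one_mulVec]
    show p0 + Matrix.toEuclideanLin M (WithLp.toLp 2 t) = x
    ext i
    have happ : (Matrix.toEuclideanLin M (WithLp.toLp 2 t)) i = (M *ᵥ t) i := rfl
    show p0 i + (Matrix.toEuclideanLin M (WithLp.toLp 2 t)) i = x i
    rw [happ, hMt]
    simp [hw]
  calc volume K ≤ volume (p0 +ᵥ (Matrix.toEuclideanLin M) '' Box) := measure_mono hsub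
    _ = volume ((Matrix.toEuclideanLin M) '' Box) := by rw [measure_vadd]
    _ = ENNReal.ofReal |Δ| * volume Box := by
        rw [Measure.addHaar_image_linearMap, det_toEuclideanLin]
    _ = ENNReal.ofReal |Δ| * (ENNReal.ofReal (2 * r))^d := by rw [hBox, box_volume]

theorem exists_big_det (K : Set (EuclideanSpace ℝ (Fin d))) {R : ℝ} (hR : 0 < R)
    (hvol : ENNReal.ofReal (8^d * R) ≤ volume K) :
    ∃ p0 ∈ K, ∃ v : Fin d → EuclideanSpace ℝ (Fin d), (∀ i, v i ∈ K) ∧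
      R ≤ |(ptsMat p0 v).det| := by
  have hK0 : volume K ≠ 0 := by
    intro h
    rw [h, le_zero_iff] at hvol
    exact (ENNReal.ofReal_pos.2 (by positivity : (0:ℝ) < 8^d * R)).ne' hvol
  set S : Set ℝ := {s : ℝ | ∃ p0, p0 ∈ K ∧ ∃ v : Fin d → EuclideanSpace ℝ (Fin d),
    (∀ i, v i ∈ K) ∧ s = |(ptsMat p0 v).det|} with hS
  obtain ⟨q0, hq0, u, huK, hu0⟩ := exists_det_ne_zero K hK0
  have hSne : S.Nonempty := ⟨|(ptsMat q0 u).det|, q0, hq0, u, huK, rfl⟩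
  by_cases hbdd : BddAbove S
  · set D := sSup S with hD
    have hDpos : 0 < D :=
      lt_of_lt_of_le (abs_pos.2 hu0) (le_csSup hbdd ⟨q0, hq0, u, huK, rfl⟩)
    obtain ⟨s, hsS, hs⟩ := exists_lt_of_lt_csSup hSne (by linarith : D / 2 < D)
    obtain ⟨p0, hp0, v, hvK, rfl⟩ := hsS
    set Δ := (ptsMat p0 v).det with hΔdef
    have hΔne : Δ ≠ 0 := by
      intro h
      rw [h] at hs
      simp at hs
      linarith
    refine ⟨p0, hp0, v, hvK, ?_⟩
    have hslab := slab_bound K p0 v D hΔne ?_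
    · -- extract real inequality
      have h2 : 2 * (D / |Δ|) ≤ 4 := by
        have habs : 0 < |Δ| := abs_pos.2 hΔne
        have : D / |Δ| ≤ 2 := by
          rw [div_le_iff₀ habs]
          linarith
        linarith
      have hle : volume K ≤ ENNReal.ofReal (|Δ| * 4^d) := by
        refine le_trans hslab ?_
        rw [ENNReal.ofReal_mul (abs_nonneg _), ENNReal.ofReal_pow (by norm_num : (0:ℝ) ≤ 4)]
        exact mul_le_mul_right (pow_le_pow_left' (ENNReal.ofReal_le_ofReal h2) d) _
      have hreal : 8^d * R ≤ |Δ| * 4^d := by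
        have := le_trans hvol hle
        rwa [ENNReal.ofReal_le_ofReal_iff (by positivity)] at this
      have h8 : (8:ℝ)^d = 2^d * 4^d := by rw [← mul_pow]; norm_num
      have h4 : (0:ℝ) < 4^d := by positivity
      have h2d : 2^d * R ≤ |Δ| := by
        rw [h8] at hreal
        nlinarith
      have hfin : R ≤ 2^d * R :=
        le_mul_of_one_le_left hR.le (one_le_pow₀ (by norm_num))
      linarith
    · intro x hx i
      have hmem : |((ptsMat p0 v).updateCol i (fun r => x r - p0 r)).det| ∈ S := by
        refine ⟨p0, hp0, Function.update v i x, ?_, ?_⟩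
        · intro j
          rcases eq_or_ne j i with rfl | hji
          · simpa using hx
          · simpa [Function.update_apply, hji] using hvK j
        · congr 1
          congr 1
          ext a b
          rw [Matrix.updateCol_apply]
          simp only [ptsMat, Matrix.of_apply, Function.update_apply]
          rcases eq_or_ne b i with rfl | hbi
          · simp
          · simp [hbi]
      exact le_csSup hbdd hmem
  · rw [not_bddAbove_iff] at hbdd
    obtain ⟨s, hsS, hRs⟩ := hbdd R
    obtain ⟨p0, hp0, v, hvK, rfl⟩ := hsS
    exact ⟨p0, hp0, v, hvK, hRs.le⟩

theorem forward_dir (d : ℕ) (hd : 2 ≤ d)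
    (Y : Set (EuclideanSpace ℝ (Fin d)))
    (h : ∃ c : ℝ, 0 < c ∧ ∀ K : Set (EuclideanSpace ℝ (Fin d)),
        Convex ℝ K → volume K = 1 → ((c • Y) ∩ K).Nonempty) :
    (∃ T : ℝ, 0 < T ∧
      ∀ (A : EuclideanSpace ℝ (Fin d) →ₗ[ℝ] EuclideanSpace ℝ (Fin d))
        (b : EuclideanSpace ℝ (Fin d)), LinearMap.det A = 1 →
          (((fun x => A x + b) '' Y) ∩ ball 0 T).Nonempty) := by
  haveI : NeZero d := ⟨by omega⟩
  obtain ⟨c, hc, hY⟩ := h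
  set E := EuclideanSpace ℝ (Fin d)
  have hVpos : 0 < volume (ball (0:E) 1) := measure_ball_pos _ _ one_pos
  have hVlt : volume (ball (0:E) 1) < ⊤ := measure_ball_lt_top
  set v : ℝ := (volume (ball (0:E) 1)).toReal with hv
  have hvpos : 0 < v := ENNReal.toReal_pos hVpos.ne' hVlt.ne
  set T : ℝ := (v⁻¹ ^ ((d:ℝ)⁻¹)) / c with hT
  have hTpos : 0 < T := by
    apply div_pos _ hc
    exact Real.rpow_pos_of_pos (inv_pos.2 hvpos) _
  refine ⟨T, hTpos, fun A b hdet => ?_⟩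
  set S : Set E := A ⁻¹' (ball (-b) T) with hS
  have hKconv : Convex ℝ (c • S) := (Convex.linear_preimage (convex_ball _ _) A).smul c
  have hKvol : volume (c • S) = 1 := by
    haveI : Nontrivial E := inferInstance
    rw [Measure.addHaar_smul, hS, Measure.addHaar_preimage_linearMap volume (by rw [hdet]; norm_num),
      Measure.addHaar_ball (μ := volume) (-b) hTpos.le, hdet]
    rw [show Module.finrank ℝ E = d from finrank_euclideanSpace_fin]
    rw [show |(1:ℝ)⁻¹| = 1 by norm_num, ENNReal.ofReal_one, one_mul]
    rw [← mul_assoc, ← ENNReal.ofReal_mul (by positivity)]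
    have : |c ^ d| * T ^ d = (c * T)^d := by
      rw [mul_pow, abs_of_nonneg (by positivity)]
    rw [this]
    have hcT : c * T = v⁻¹ ^ ((d:ℝ)⁻¹) := by
      rw [hT, mul_div_assoc', mul_div_cancel_left₀ _ hc.ne']
    rw [hcT, ← Real.rpow_natCast (v⁻¹ ^ ((d:ℝ)⁻¹)) d, ← Real.rpow_mul (by positivity)]
    rw [inv_mul_cancel₀ (by exact_mod_cast (by omega : d ≠ 0)), Real.rpow_one]
    rw [ENNReal.ofReal_inv_of_pos hvpos, hv, ENNReal.ofReal_toReal hVlt.ne]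
    exact ENNReal.inv_mul_cancel hVpos.ne' hVlt.ne
  obtain ⟨x, hxY, hxK⟩ := hY (c • S) hKconv hKvol
  obtain ⟨y, hyY, rfl⟩ := hxY
  have hyS : y ∈ S := by
    rwa [← Set.smul_mem_smul_set_iff₀ (ne_of_gt hc) S]
  refine ⟨A y + b, ⟨y, hyY, rfl⟩, ?_⟩
  have : A y ∈ ball (-b) T := hyS
  rw [mem_ball] at this ⊢
  rw [dist_eq_norm, sub_neg_eq_add] at this
  simpa [dist_eq_norm] using this

theorem backward_dir (d : ℕ) (hd : 2 ≤ d)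
    (Y : Set (EuclideanSpace ℝ (Fin d)))
    (h : ∃ T : ℝ, 0 < T ∧
      ∀ (A : EuclideanSpace ℝ (Fin d) →ₗ[ℝ] EuclideanSpace ℝ (Fin d))
        (b : EuclideanSpace ℝ (Fin d)), LinearMap.det A = 1 →
          (((fun x => A x + b) '' Y) ∩ ball 0 T).Nonempty) :
    (∃ c : ℝ, 0 < c ∧ ∀ K : Set (EuclideanSpace ℝ (Fin d)),
        Convex ℝ K → volume K = 1 → ((c • Y) ∩ K).Nonempty) := by
  obtain ⟨T, hT, hmeets⟩ := h
  have hd0 : (0:ℝ) < d := by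
    have : 0 < d := by omega
    exact_mod_cast this
  set ρ : ℝ := (2*d)⁻¹ with hρdef
  have hρ : 0 < ρ := by positivity
  set R : ℝ := (T/ρ)^d with hRdef
  have hR : 0 < R := by positivity
  set c : ℝ := ((8^d * R + 1)⁻¹) ^ ((d:ℝ)⁻¹) with hcdef
  have hc : 0 < c := Real.rpow_pos_of_pos (by positivity) _
  have hcd : c^d = (8^d*R+1)⁻¹ := by
    rw [hcdef, ← Real.rpow_natCast (((8^d * R + 1)⁻¹) ^ ((d:ℝ)⁻¹)) d,
      ← Real.rpow_mul (by positivity), inv_mul_cancel₀ (by exact_mod_cast (ne_of_gt hd0)),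
      Real.rpow_one]
  refine ⟨c, hc, fun K hKconv hKvol => ?_⟩
  set K' : Set (EuclideanSpace ℝ (Fin d)) := c⁻¹ • K with hK'def
  have hK'conv : Convex ℝ K' := hKconv.smul _
  have hK'vol : ENNReal.ofReal (8^d*R) ≤ volume K' := by
    rw [hK'def, Measure.addHaar_smul, finrank_euclideanSpace_fin, hKvol, mul_one,
      abs_of_nonneg (by positivity), inv_pow, hcd, inv_inv]
    exact ENNReal.ofReal_le_ofReal (by linarith)
  obtain ⟨p0, hp0, v, hvK, hdet⟩ := exists_big_det K' hR hK'vol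
  set M := ptsMat p0 v with hMdef
  set Δ := M.det with hΔdef
  have hΔne : Δ ≠ 0 := by
    intro h0
    rw [h0] at hdet
    simp at hdet
    linarith
  set i0 : Fin d := ⟨0, by omega⟩ with hi0
  set ε : ℝ := R / Δ with hεdef
  set diagE : Fin d → ℝ := Function.update (fun _ : Fin d => (1:ℝ)) i0 ε with hdiagE
  set Dmat := Matrix.diagonal diagE with hDmat
  have hdetD : Dmat.det = ε := by
    rw [hDmat, Matrix.det_diagonal, hdiagE,
      Finset.prod_update_of_mem (Finset.mem_univ i0)]
    simp
  set N := M * Dmat with hNdef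
  have hdetN : N.det = R := by
    rw [hNdef, Matrix.det_mul, hdetD, hεdef, ← hΔdef]
    field_simp
  have hNunit : IsUnit N.det := by
    rw [hdetN]
    exact isUnit_iff_ne_zero.2 hR.ne'
  set Amat := (T/ρ) • N⁻¹ with hAmat
  set A := Matrix.toEuclideanLin Amat with hA
  have hdetA : LinearMap.det A = 1 := by
    rw [hA, det_toEuclideanLin, hAmat, Matrix.det_smul, Matrix.det_nonsing_inv, hdetN,
      Ring.inverse_eq_inv, Fintype.card_fin, ← hRdef]
    exact mul_inv_cancel₀ hR.ne'
  set c₀ : EuclideanSpace ℝ (Fin d) := WithLp.toLp 2 (fun _ => ρ) with hc₀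
  set q : EuclideanSpace ℝ (Fin d) := p0 + Matrix.toEuclideanLin M c₀ with hq
  obtain ⟨x, ⟨y, hyY, rfl⟩, hxball⟩ := hmeets A (-(A q)) hdetA
  rw [mem_ball_zero_iff] at hxball
  have hxball' : ‖A y + -(A q)‖ < T := hxball
  -- main claim: y ∈ K'
  have hyK' : y ∈ K' := by
    set z : EuclideanSpace ℝ (Fin d) := y - q with hz
    have hAz : A y + -(A q) = A z := by rw [hz, map_sub]; abel
    set u : EuclideanSpace ℝ (Fin d) := Matrix.toEuclideanLin N⁻¹ z with hu
    have hAzu : A z = (T/ρ) • u := by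
      rw [hA, hAmat, LinearEquiv.map_smul, LinearMap.smul_apply, hu]
    have hnu : ‖u‖ < ρ := by
      rw [hAz, hAzu, norm_smul, Real.norm_eq_abs, abs_of_pos (div_pos hT hρ)] at hxball'
      have hTρ : (T/ρ) * ρ = T := by field_simp
      by_contra hcon
      push_neg at hcon
      have : (T/ρ) * ρ ≤ (T/ρ) * ‖u‖ :=
        mul_le_mul_of_nonneg_left hcon (le_of_lt (div_pos hT hρ))
      rw [hTρ] at this
      linarith
    have hzu : z = Matrix.toEuclideanLin N u := by
      rw [hu, Matrix.toEuclideanLin_eq_toLin,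
        ← Matrix.toLin_mul_apply, Matrix.mul_nonsing_inv N hNunit, Matrix.toLin_one,
        LinearMap.id_apply]
    set w : EuclideanSpace ℝ (Fin d) := Matrix.toEuclideanLin Dmat u with hw
    have hNMw : Matrix.toEuclideanLin N u = Matrix.toEuclideanLin M w := by
      rw [hw, hNdef, Matrix.toEuclideanLin_eq_toLin, ← Matrix.toLin_mul_apply]
    have hwcoord : ∀ j, |w j| ≤ |u j| := by
      intro j
      have happ : w j = (Dmat *ᵥ (fun i => u i)) j := rfl
      rw [happ, hDmat, Matrix.mulVec_diagonal]
      have hdiag_le : |diagE j| ≤ 1 := by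
        rcases eq_or_ne j i0 with rfl | hj
        · rw [hdiagE, Function.update_self, hεdef, abs_div,
            div_le_one (abs_pos.2 hΔne), abs_of_pos hR]
          exact hdet
        · rw [hdiagE, Function.update_of_ne hj]
          norm_num
      calc |diagE j * u j| = |diagE j| * |u j| := abs_mul _ _
        _ ≤ 1 * |u j| := mul_le_mul_of_nonneg_right hdiag_le (abs_nonneg _)
        _ = |u j| := one_mul _
    have hwlt : ∀ j, |w j| < ρ := fun j =>
      lt_of_le_of_lt (le_trans (hwcoord j) (coord_le_norm u j)) hnu
    set t : Fin d → ℝ := fun j => ρ + w j with ht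
    have htpos : ∀ j, 0 ≤ t j := by
      intro j
      have := abs_lt.1 (hwlt j)
      simp only [ht]
      linarith [this.1]
    have htsum : ∑ j, t j ≤ 1 := by
      have h1 : ∑ j, t j = d * ρ + ∑ j, w j := by
        rw [ht, Finset.sum_add_distrib, Finset.sum_const, Finset.card_univ, Fintype.card_fin]
        simp [nsmul_eq_mul]
      have h2 : ∑ j, w j ≤ d * ρ := by
        calc ∑ j, w j ≤ ∑ j, |w j| := Finset.sum_le_sum (fun j _ => le_abs_self _)
          _ ≤ ∑ _j : Fin d, ρ := Finset.sum_le_sum (fun j _ => (hwlt j).le)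
          _ = d * ρ := by rw [Finset.sum_const, Finset.card_univ, Fintype.card_fin]; simp [nsmul_eq_mul]
      have h3 : (d:ℝ) * ρ = 1/2 := by
        rw [hρdef]
        field_simp
      rw [h1]
      rw [h3] at h2 ⊢
      linarith
    -- y = p0 + M (c₀ + w)
    have hyeq : y = p0 + Matrix.toEuclideanLin M (c₀ + w) := by
      have : y = q + z := by rw [hz]; abel
      rw [this, hzu, hNMw, hq, map_add]
      abel
    -- rewrite as convex combination
    have hcomb : y = (1 - ∑ j, t j) • p0 + ∑ j, t j • v j := by
      rw [hyeq]
      ext i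
      have hML : (Matrix.toEuclideanLin M (c₀ + w)) i = ∑ j, (v j i - p0 i) * t j := by
        have : (Matrix.toEuclideanLin M (c₀ + w)) i = (M *ᵥ (fun r => (c₀ + w) r)) i := rfl
        rw [this]
        simp only [Matrix.mulVec, dotProduct]
        apply Finset.sum_congr rfl
        intro j _
        have h5 : (c₀ + w) j = t j := rfl
        rw [h5]
        have h6 : M i j = v j i - p0 i := rfl
        rw [h6]
      show p0 i + (Matrix.toEuclideanLin M (c₀ + w)) i
          = ((1 - ∑ j, t j) • p0) i + (∑ j, t j • v j) i
      rw [hML, euclid_sum_apply]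
      have h7 : ((1 - ∑ j, t j) • p0) i = (1 - ∑ j, t j) * p0 i := rfl
      rw [h7]
      have h8 : ∑ j, (v j i - p0 i) * t j
          = (∑ j, t j * v j i) - (∑ j, t j) * p0 i := by
        rw [Finset.sum_mul]
        rw [← Finset.sum_sub_distrib]
        apply Finset.sum_congr rfl
        intro j _
        ring
      rw [h8]
      ring
    have hmem : ((1 - ∑ j, t j) • p0 + ∑ j, t j • v j) ∈ K' := by
      have h8 : (∑ i : Fin (d+1), (Fin.cons (1 - ∑ j, t j) t : Fin (d+1) → ℝ) i •
          (Fin.cons p0 v : Fin (d+1) → EuclideanSpace ℝ (Fin d)) i) ∈ K' := by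
        apply hK'conv.sum_mem
        · intro i _
          refine Fin.cases ?_ ?_ i
          · have : (0:ℝ) ≤ 1 - ∑ j, t j := by linarith [htsum]
            simpa using this
          · intro j
            simpa using htpos j
        · rw [Fin.sum_univ_succ]
          simp only [Fin.cons_zero, Fin.cons_succ]
          ring
        · intro i _
          refine Fin.cases ?_ ?_ i
          · simpa using hp0
          · intro j
            simpa using hvK j
      rw [Fin.sum_univ_succ] at h8
      simp only [Fin.cons_zero, Fin.cons_succ] at h8
      exact h8
    rw [hcomb]
    exact hmem
  -- conclude
  obtain ⟨k, hk, hky⟩ := hyK'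
  refine ⟨c • y, ⟨y, hyY, rfl⟩, ?_⟩
  have : c • y = k := by
    rw [← hky, smul_smul]
    rw [mul_inv_cancel₀ hc.ne', one_smul]
  rwa [this]

end DanzerAux

/-- `Y` is a dilate of a Danzer set iff there is `T > 0` such that every
image of `Y` under an affine volume-preserving orientation-preserving map
meets the ball `B(0,T)`. -/
theorem dilate_danzer_iff_asl_orbit_meets_ball (d : ℕ) (hd : 2 ≤ d)
    (Y : Set (EuclideanSpace ℝ (Fin d))) :
    (∃ c : ℝ, 0 < c ∧ ∀ K : Set (EuclideanSpace ℝ (Fin d)),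
        Convex ℝ K → volume K = 1 → ((c • Y) ∩ K).Nonempty) ↔
    (∃ T : ℝ, 0 < T ∧
      ∀ (A : EuclideanSpace ℝ (Fin d) →ₗ[ℝ] EuclideanSpace ℝ (Fin d))
        (b : EuclideanSpace ℝ (Fin d)), LinearMap.det A = 1 →
          (((fun x => A x + b) '' Y) ∩ ball 0 T).Nonempty) := by
  constructor
  · exact DanzerAux.forward_dir d hd Y
  · exact DanzerAux.backward_dir d hd Y
end

section
/- Let H_0 ≅ SL_2(ℝ) be embedded in SL_n(ℝ) (n ≥ 3) in the upper-left corner, acting standardly on the first two coordinates and trivially on the rest. Then for every unimodular lattice L ⊆ ℝ^n, the orbit {hL : h ∈ H_0} in the space of unimodular lattices is unbounded; equivalently, for every ε > 0 there exist h ∈ H_0 and a nonzero vector v ∈ L with ‖h v‖ < ε. -/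
open Matrix

/-- The matrix of an element of `SL₂(ℝ)` embedded in the upper-left corner
of `SLₙ(ℝ)`. -/
def IsUpperLeftSL2 {n : ℕ} (H : Matrix (Fin n) (Fin n) ℝ) : Prop :=
  H.det = 1 ∧ ∀ i j : Fin n, (2 ≤ (i : ℕ) ∨ 2 ≤ (j : ℕ)) →
    H i j = if i = j then 1 else 0

open Matrix Finset MeasureTheory Submodule
open scoped ENNReal

section Helpers

variable {n : ℕ}

/-- The entry condition of `IsUpperLeftSL2` as a standalone predicate. -/
def ULent (A : Matrix (Fin n) (Fin n) ℝ) : Prop :=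
  ∀ i j : Fin n, (2 ≤ (i : ℕ) ∨ 2 ≤ (j : ℕ)) → A i j = if i = j then 1 else 0

lemma sum_two (hn : 3 ≤ n) (f : Fin n → ℝ) (h : ∀ j : Fin n, 2 ≤ (j : ℕ) → f j = 0) :
    ∑ j, f j = f ⟨0, by omega⟩ + f ⟨1, by omega⟩ := by
  rw [← Finset.sum_subset (Finset.subset_univ {⟨0, by omega⟩, ⟨1, by omega⟩})
    (fun x _ hx => h x (by simp [Finset.mem_insert, Fin.ext_iff] at hx; omega))]
  exact Finset.sum_pair (by simp [Fin.ext_iff])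

lemma ULent_mul {A B : Matrix (Fin n) (Fin n) ℝ} (hA : ULent A) (hB : ULent B) :
    ULent (A * B) := by
  intro i j hij
  rcases hij with hi | hj
  · have h1 : ∀ k, A i k * B k j = if i = k then B k j else 0 := fun k => by
      rw [hA i k (Or.inl hi)]; split <;> simp
    rw [Matrix.mul_apply]
    simp_rw [h1]
    rw [Finset.sum_ite_eq, if_pos (Finset.mem_univ i), hB i j (Or.inl hi)]
  · have h1 : ∀ k, A i k * B k j = if k = j then A i k else 0 := fun k => by
      rw [hB k j (Or.inr hj)]; split <;> simp
    rw [Matrix.mul_apply]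
    simp_rw [h1]
    rw [Finset.sum_ite_eq', if_pos (Finset.mem_univ j), hA i j (Or.inr hj)]

lemma ULent_mulVec_tail {A : Matrix (Fin n) (Fin n) ℝ} (hA : ULent A) (v : Fin n → ℝ)
    {i : Fin n} (hi : 2 ≤ (i : ℕ)) : A.mulVec v i = v i := by
  have h1 : ∀ k, A i k * v k = if i = k then v k else 0 := fun k => by
    rw [hA i k (Or.inl hi)]; split <;> simp
  rw [Matrix.mulVec, dotProduct]
  simp_rw [h1]
  rw [Finset.sum_ite_eq, if_pos (Finset.mem_univ i)]

lemma ULent_mulVec_head (hn : 3 ≤ n) {A : Matrix (Fin n) (Fin n) ℝ} (hA : ULent A)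
    (v : Fin n → ℝ) {i : Fin n} (hi : (i : ℕ) < 2) :
    A.mulVec v i = A i ⟨0, by omega⟩ * v ⟨0, by omega⟩ + A i ⟨1, by omega⟩ * v ⟨1, by omega⟩ := by
  rw [Matrix.mulVec, dotProduct]
  exact sum_two hn _ fun j hj => by
    rw [hA i j (Or.inr hj), if_neg (by intro h; rw [h] at hi; omega), zero_mul]

end Helpers

lemma exists_small_tail (n : ℕ) (hn : 3 ≤ n) (g : Matrix (Fin n) (Fin n) ℝ) (hg : g.det = 1)
    (ε₁ : ℝ) (hε₁ : 0 < ε₁) (hε₁' : ε₁ < 1) :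
    ∃ m : Fin n → ℤ, m ≠ 0 ∧ ∀ i : Fin n, 2 ≤ (i : ℕ) →
      |g.mulVec (fun i => (m i : ℝ)) i| < ε₁ := by
  have hinv : Invertible g := g.invertibleOfIsUnitDet (by rw [hg]; exact isUnit_one)
  set b : Module.Basis (Fin n) ℝ (Fin n → ℝ) :=
    (Pi.basisFun ℝ (Fin n)).map (g.toLinearEquiv' hinv) with hb
  have hbapp : ∀ i j, b i j = g j i := by
    intro i j
    simp [hb, Matrix.toLinearEquiv', Matrix.toLin'_apply, Matrix.mulVec_single]
  set r : Fin n → ℝ := fun i => if (i : ℕ) < 2 then ε₁⁻¹ ^ n else ε₁ with hr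
  have hrpos : ∀ i, 0 < r i := by
    intro i; rw [hr]; dsimp only
    split
    · positivity
    · exact hε₁
  set s : Set (Fin n → ℝ) := Set.univ.pi fun i => Set.Ioo (-(r i)) (r i) with hs
  have h_symm : ∀ x ∈ s, -x ∈ s := by
    intro x hx i _
    have := hx i (Set.mem_univ i)
    simp only [Set.mem_Ioo, Pi.neg_apply] at *
    constructor <;> linarith [this.1, this.2]
  have h_conv : Convex ℝ s := convex_pi fun i _ => convex_Ioo _ _
  have h_fund := ZSpan.isAddFundamentalDomain' b volume
  have : Countable (span ℤ (Set.range b)).toAddSubgroup := by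
    change Countable (span ℤ (Set.range b)); infer_instance
  have hvolF : volume (ZSpan.fundamentalDomain b) = 1 := by
    rw [ZSpan.volume_fundamentalDomain]
    have : (Matrix.of b).det = 1 := by
      have : Matrix.of b = gᵀ := by
        ext i j; exact hbapp i j
      rw [this, Matrix.det_transpose, hg]
    rw [this]; simp
  have hcard2 : (Finset.univ.filter fun i : Fin n => (i : ℕ) < 2).card = 2 := by
    have : (Finset.univ.filter fun i : Fin n => (i : ℕ) < 2) =
        {⟨0, by omega⟩, ⟨1, by omega⟩} := by
      ext x
      simp [Fin.ext_iff]
      omega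
    rw [this]
    simp [Fin.ext_iff]
  have hcardc : (Finset.univ.filter fun i : Fin n => ¬ ((i : ℕ) < 2)).card = n - 2 := by
    have := Finset.card_filter_add_card_filter_not (s := (Finset.univ : Finset (Fin n)))
      (p := fun i : Fin n => (i : ℕ) < 2)
    simp only [Finset.card_univ, Fintype.card_fin] at this
    omega
  have hprod_r : ∏ i, r i = (ε₁⁻¹ ^ n) ^ 2 * ε₁ ^ (n - 2) := by
    rw [hr, Finset.prod_ite, Finset.prod_const, Finset.prod_const, hcard2, hcardc]
  have hprod_gt : 1 < ∏ i, r i := by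
    rw [hprod_r, ← pow_mul, inv_pow, mul_comm, ← div_eq_mul_inv]
    rw [lt_div_iff₀ (by positivity), one_mul]
    exact pow_lt_pow_right_of_lt_one₀ hε₁ hε₁' (by omega)
  have h_ineq : volume (ZSpan.fundamentalDomain b) * 2 ^ (Module.finrank ℝ (Fin n → ℝ)) <
      volume s := by
    rw [hvolF, one_mul, hs]
    rw [volume_pi_pi]
    have : ∀ i : Fin n, volume (Set.Ioo (-(r i)) (r i)) = ENNReal.ofReal (2 * r i) := by
      intro i; rw [Real.volume_Ioo]; ring_nf
    simp_rw [this]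
    rw [← ENNReal.ofReal_prod_of_nonneg (fun i _ => by positivity)]
    rw [Finset.prod_mul_distrib, Finset.prod_const, Finset.card_univ, Fintype.card_fin]
    have hfr : Module.finrank ℝ (Fin n → ℝ) = n := by simp
    rw [hfr]
    have h2n : ((2 : ℝ≥0∞) ^ n) = ENNReal.ofReal (2 ^ n) := by
      rw [ENNReal.ofReal_pow (by norm_num)]; norm_num
    rw [h2n, ENNReal.ofReal_lt_ofReal_iff (by positivity)]
    nlinarith [hprod_gt, pow_pos (show (0:ℝ) < 2 by norm_num) n]
  obtain ⟨⟨x, hx⟩, h_nz, h_mem⟩ := exists_ne_zero_mem_lattice_of_measure_mul_two_pow_lt_measure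
    h_fund h_symm h_conv h_ineq
  rw [Submodule.mem_toAddSubgroup, mem_span_range_iff_exists_fun] at hx
  obtain ⟨c, hc⟩ := hx
  have hxne : x ≠ 0 := by
    simpa [Subtype.ext_iff] using h_nz
  have hxeq : g.mulVec (fun i => (c i : ℝ)) = x := by
    funext j
    rw [← hc]
    rw [Matrix.mulVec, dotProduct]
    rw [Finset.sum_apply]
    exact Finset.sum_congr rfl fun i _ => by
      rw [Pi.smul_apply, hbapp i j, zsmul_eq_mul, mul_comm]
  refine ⟨c, ?_, ?_⟩
  · rintro rfl
    apply hxne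
    rw [← hxeq]
    funext j
    simp [Matrix.mulVec]
  · intro i hi
    have := h_mem i (Set.mem_univ i)
    simp only [Set.mem_Ioo] at this
    have hri : r i = ε₁ := by rw [hr]; simp only; rw [if_neg (by omega)]
    rw [hxeq]
    rw [abs_lt]
    rw [hri] at this
    exact ⟨by linarith [this.1], this.2⟩

section SL2

variable {n : ℕ}

lemma transvection_entry (a b i j : Fin n) (c : ℝ) :
    Matrix.transvection a b c i j =
      (if i = j then (1:ℝ) else 0) + c * (if a = i ∧ b = j then 1 else 0) := by
  simp [Matrix.transvection, Matrix.single, Matrix.one_apply]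

lemma ULent_transvection (a b : Fin n) (ha : (a : ℕ) < 2) (hb : (b : ℕ) < 2) (c : ℝ) :
    ULent (Matrix.transvection a b c) := by
  intro i j hij
  rw [transvection_entry]
  have : ¬(a = i ∧ b = j) := by
    rintro ⟨rfl, rfl⟩
    omega
  rw [if_neg this, mul_zero, add_zero]

lemma ULent_diagonal (d : Fin n → ℝ) (hd : ∀ k : Fin n, 2 ≤ (k : ℕ) → d k = 1) :
    ULent (Matrix.diagonal d) := by
  intro i j hij
  by_cases h : i = j
  · subst h
    rw [Matrix.diagonal_apply_eq, if_pos rfl]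
    exact hd i (by omega)
  · rw [Matrix.diagonal_apply_ne _ h, if_neg h]

end SL2

theorem sl2_aux (n : ℕ) (hn : 3 ≤ n)
    (g : Matrix (Fin n) (Fin n) ℝ) (hg : g.det = 1) :
    ∀ ε : ℝ, 0 < ε →
      ∃ H : Matrix (Fin n) (Fin n) ℝ,
        (H.det = 1 ∧ ∀ i j : Fin n, (2 ≤ (i : ℕ) ∨ 2 ≤ (j : ℕ)) →
          H i j = if i = j then 1 else 0) ∧
        ∃ m : Fin n → ℤ, m ≠ 0 ∧
          ‖H.mulVec (g.mulVec (fun i => (m i : ℝ)))‖ < ε := by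
  intro ε hε
  set ε₁ : ℝ := min ε 1 / 2 with hε₁def
  have hε₁ : 0 < ε₁ := by positivity
  have hε₁1 : ε₁ < 1 := by
    have := min_le_right ε 1; rw [hε₁def]; linarith
  have hε₁ε : ε₁ < ε := by
    have := min_le_left ε 1; rw [hε₁def]; linarith
  obtain ⟨m, hm0, hmtail⟩ := exists_small_tail n hn g hg ε₁ hε₁ hε₁1
  set x : Fin n → ℝ := g.mulVec (fun i => (m i : ℝ)) with hxdef
  set i0 : Fin n := ⟨0, by omega⟩ with hi0
  set i1 : Fin n := ⟨1, by omega⟩ with hi1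
  have ne10 : i0 ≠ i1 := by simp [hi0, hi1, Fin.ext_iff]
  by_cases hz : x i0 = 0 ∧ x i1 = 0
  · refine ⟨1, ⟨Matrix.det_one, fun i j _ => Matrix.one_apply⟩, m, hm0, ?_⟩
    rw [Matrix.one_mulVec, ← hxdef, pi_norm_lt_iff hε]
    intro i
    rw [Real.norm_eq_abs]
    rcases Nat.lt_or_ge (i : ℕ) 2 with h | h
    · have h01 : (i : ℕ) = 0 ∨ (i : ℕ) = 1 := by omega
      have : i = i0 ∨ i = i1 := by
        rcases h01 with h' | h'
        · exact Or.inl (Fin.ext h')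
        · exact Or.inr (Fin.ext h')
      rcases this with rfl | rfl
      · rw [hz.1]; simpa using hε
      · rw [hz.2]; simpa using hε
    · exact lt_trans (hmtail i h) hε₁ε
  · -- nontrivial first two coordinates
    set t : ℝ := if x i0 = 0 then 1 else 0 with ht
    set a0 : ℝ := x i0 + t * x i1 with ha0def
    have ha0 : a0 ≠ 0 := by
      rw [ha0def, ht]
      by_cases h0 : x i0 = 0
      · rw [if_pos h0, h0, zero_add, one_mul]
        exact fun h => hz ⟨h0, h⟩
      · rw [if_neg h0, zero_mul, add_zero]
        exact h0
    set TU := Matrix.transvection i0 i1 t with hTUdef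
    set TL := Matrix.transvection i1 i0 (-(x i1) / a0) with hTLdef
    set d : Fin n → ℝ := fun k => if k = i0 then ε₁ / a0 else if k = i1 then a0 / ε₁ else 1
      with hddef
    set D := Matrix.diagonal d with hDdef
    have hTU : ULent TU := ULent_transvection i0 i1 (by simp [hi0]) (by simp [hi1]) t
    have hTL : ULent TL := ULent_transvection i1 i0 (by simp [hi1]) (by simp [hi0]) _
    have hi0lt : (i0 : ℕ) < 2 := by simp [hi0]
    have hi1lt : (i1 : ℕ) < 2 := by simp [hi1]
    have hD : ULent D := ULent_diagonal d fun k hk => by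
      simp only [hddef]
      rw [if_neg (by intro h; rw [h] at hk; simp [hi0] at hk),
        if_neg (by intro h; rw [h] at hk; simp [hi1] at hk)]
    -- entries
    have hTU00 : TU i0 i0 = 1 := by rw [hTUdef, transvection_entry]; simp [ne10.symm]
    have hTU01 : TU i0 i1 = t := by rw [hTUdef, transvection_entry]; simp [ne10]
    have hTU10 : TU i1 i0 = 0 := by rw [hTUdef, transvection_entry]; simp [ne10.symm]
    have hTU11 : TU i1 i1 = 1 := by rw [hTUdef, transvection_entry]; simp [ne10]
    have hTL00 : TL i0 i0 = 1 := by rw [hTLdef, transvection_entry]; simp [ne10.symm]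
    have hTL01 : TL i0 i1 = 0 := by rw [hTLdef, transvection_entry]; simp [ne10]
    have hTL10 : TL i1 i0 = -(x i1) / a0 := by rw [hTLdef, transvection_entry]; simp [ne10.symm]
    have hTL11 : TL i1 i1 = 1 := by rw [hTLdef, transvection_entry]; simp [ne10]
    have hD00 : D i0 i0 = ε₁ / a0 := by
      rw [hDdef, Matrix.diagonal_apply_eq]; simp only [hddef]; simp
    have hD01 : D i0 i1 = 0 := Matrix.diagonal_apply_ne _ ne10
    have hD10 : D i1 i0 = 0 := Matrix.diagonal_apply_ne _ ne10.symm
    have hD11 : D i1 i1 = a0 / ε₁ := by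
      rw [hDdef, Matrix.diagonal_apply_eq]; simp only [hddef]
      simp [ne10.symm]
    -- vector computations
    set y1 := TU.mulVec x with hy1def
    set y2 := TL.mulVec y1 with hy2def
    set y3 := D.mulVec y2 with hy3def
    have hy1_0 : y1 i0 = a0 := by
      rw [hy1def, ULent_mulVec_head hn hTU x hi0lt, ← hi0, ← hi1, hTU00, hTU01, ha0def]; ring
    have hy1_1 : y1 i1 = x i1 := by
      rw [hy1def, ULent_mulVec_head hn hTU x hi1lt, ← hi0, ← hi1, hTU10, hTU11]; ring
    have hy1_t : ∀ i : Fin n, 2 ≤ (i : ℕ) → y1 i = x i := fun i hi =>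
      ULent_mulVec_tail hTU x hi
    have hy2_0 : y2 i0 = a0 := by
      rw [hy2def, ULent_mulVec_head hn hTL y1 hi0lt, ← hi0, ← hi1, hTL00, hTL01, hy1_0]; ring
    have hy2_1 : y2 i1 = 0 := by
      rw [hy2def, ULent_mulVec_head hn hTL y1 hi1lt, ← hi0, ← hi1, hTL10, hTL11, hy1_0, hy1_1]
      field_simp
      ring
    have hy2_t : ∀ i : Fin n, 2 ≤ (i : ℕ) → y2 i = x i := fun i hi => by
      rw [hy2def, ULent_mulVec_tail hTL y1 hi, hy1_t i hi]
    have hy3_0 : y3 i0 = ε₁ := by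
      rw [hy3def, ULent_mulVec_head hn hD y2 hi0lt, ← hi0, ← hi1, hD00, hD01, hy2_0]
      field_simp
      ring
    have hy3_1 : y3 i1 = 0 := by
      rw [hy3def, ULent_mulVec_head hn hD y2 hi1lt, ← hi0, ← hi1, hD10, hD11, hy2_1]
      ring
    have hy3_t : ∀ i : Fin n, 2 ≤ (i : ℕ) → y3 i = x i := fun i hi => by
      rw [hy3def, ULent_mulVec_tail hD y2 hi, hy2_t i hi]
    -- the matrix H
    refine ⟨D * (TL * TU), ⟨?_, ULent_mul hD (ULent_mul hTL hTU)⟩, m, hm0, ?_⟩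
    · rw [Matrix.det_mul, Matrix.det_mul, Matrix.det_transvection_of_ne _ _ ne10.symm _,
        Matrix.det_transvection_of_ne _ _ ne10 _, mul_one, mul_one, hDdef,
        Matrix.det_diagonal]
      rw [← Finset.mul_prod_erase _ d (Finset.mem_univ i0),
        ← Finset.mul_prod_erase _ d (Finset.mem_erase.mpr ⟨ne10.symm, Finset.mem_univ i1⟩)]
      have hrest : ∏ k ∈ (Finset.univ.erase i0).erase i1, d k = 1 :=
        Finset.prod_eq_one fun k hk => by
          rw [Finset.mem_erase, Finset.mem_erase] at hk
          simp only [hddef]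
          rw [if_neg hk.2.1, if_neg hk.1]
      rw [hrest, mul_one]
      have h1 : d i0 = ε₁ / a0 := by simp only [hddef]; simp
      have h2 : d i1 = a0 / ε₁ := by simp only [hddef]; simp [ne10.symm]
      rw [h1, h2]
      field_simp
    · have hHx : (D * (TL * TU)).mulVec x = y3 := by
        rw [← Matrix.mulVec_mulVec, ← Matrix.mulVec_mulVec, ← hy1def, ← hy2def, ← hy3def]
      rw [← hxdef, hHx, pi_norm_lt_iff hε]
      intro i
      rw [Real.norm_eq_abs]
      rcases Nat.lt_or_ge (i : ℕ) 2 with h | h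
      · have h01 : (i : ℕ) = 0 ∨ (i : ℕ) = 1 := by omega
        have : i = i0 ∨ i = i1 := by
          rcases h01 with h' | h'
          · exact Or.inl (Fin.ext h')
          · exact Or.inr (Fin.ext h')
        rcases this with rfl | rfl
        · rw [hy3_0, abs_of_pos hε₁]; exact hε₁ε
        · rw [hy3_1]; simpa using hε
      · rw [hy3_t i h]; exact lt_trans (hmtail i h) hε₁ε


/-- For every unimodular lattice `g·ℤⁿ` in `ℝⁿ` (`n ≥ 3`), the orbit under the
upper-left embedded `SL₂(ℝ)` is unbounded: for every `ε > 0` there are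
`h ∈ H₀` and a nonzero lattice vector `v` with `‖h v‖ < ε` (sup norm). -/
theorem sl2_orbit_of_lattice_unbounded (n : ℕ) (hn : 3 ≤ n)
    (g : Matrix (Fin n) (Fin n) ℝ) (hg : g.det = 1) :
    ∀ ε : ℝ, 0 < ε →
      ∃ H : Matrix (Fin n) (Fin n) ℝ, IsUpperLeftSL2 H ∧
        ∃ m : Fin n → ℤ, m ≠ 0 ∧
          ‖H.mulVec (g.mulVec (fun i => (m i : ℝ)))‖ < ε := by
  exact sl2_aux n hn g hg
end

section
/- Let V_1, …, V_r be finite-dimensional real vector spaces, P_i : V_1 × ⋯ × V_r → V_i the projections, Q_i ⊆ V_i a hyperplane for each i, and let π_i : V_i → V_i/Q_i be the quotient maps. If U ⊆ V_1 × ⋯ × V_r is a linear subspace with P_i(U) = V_i for every i, then there is a sequence (u_j) in U such that for every i, the images π_i(P_i(u_j)) tend to infinity in V_i/Q_i (i.e. their norms tend to infinity). -/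
open Filter

/-- If `U ⊆ V₁ × ⋯ × V_r` is a linear subspace projecting onto each factor
`V i`, and `Q i ⊆ V i` are hyperplanes (kernels of the nonzero functionals
`f i`), then there is a sequence in `U` whose images in each quotient
`V i / Q i` tend to infinity. -/
theorem exists_seq_in_subspace_escaping_all_hyperplane_quotients
    (r : ℕ) (V : Fin r → Type*)
    [∀ i, AddCommGroup (V i)] [∀ i, Module ℝ (V i)]
    [∀ i, FiniteDimensional ℝ (V i)]
    (Q : ∀ i, Submodule ℝ (V i))
    (f : ∀ i, V i →ₗ[ℝ] ℝ) (hf : ∀ i, f i ≠ 0)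
    (hQ : ∀ i, Q i = LinearMap.ker (f i))
    (U : Submodule ℝ (∀ i, V i))
    (hU : ∀ i, Submodule.map (LinearMap.proj i) U = ⊤) :
    ∃ u : ℕ → (∀ i, V i), (∀ j, u j ∈ U) ∧
      ∀ i, Tendsto (fun j => |f i (u j i)|) atTop atTop := by
  -- linear functionals on `U` given by `u ↦ f i (u i)`
  set g : ∀ _ : Fin r, U →ₗ[ℝ] ℝ :=
    fun i => (f i).comp ((LinearMap.proj i).comp U.subtype) with hg
  -- each `g i` is nonzero
  have hgne : ∀ i, g i ≠ 0 := by
    intro i hgi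
    obtain ⟨v, hv⟩ : ∃ v, f i v ≠ 0 := by
      by_contra h
      push_neg at h
      exact hf i (LinearMap.ext h)
    obtain ⟨w, hw, hwv⟩ : ∃ w ∈ U, (LinearMap.proj i : (∀ j, V j) →ₗ[ℝ] V i) w = v := by
      have : v ∈ Submodule.map (LinearMap.proj i) U := (hU i) ▸ Submodule.mem_top
      exact this
    have := congrArg (fun h => h ⟨w, hw⟩) hgi
    simp only [hg, LinearMap.comp_apply, LinearMap.zero_apply] at this
    rw [Submodule.subtype_apply] at this
    rw [show (LinearMap.proj i : (∀ j, V j) →ₗ[ℝ] V i) w = v from hwv] at this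
    exact hv this
  -- find `x ∈ U` with all `g i x ≠ 0`, since `U` is not a finite union of proper subspaces
  have hker : ∃ x : U, ∀ i, g i x ≠ 0 := by
    by_contra h
    push_neg at h
    have hcover : ⋃ i, ((LinearMap.ker (g i) : Submodule ℝ U) : Set U) = Set.univ := by
      ext x
      simp only [Set.mem_iUnion, Set.mem_univ, iff_true, SetLike.mem_coe,
        LinearMap.mem_ker]
      exact h x
    obtain ⟨i, hi⟩ := Subspace.exists_eq_top_of_iUnion_eq_univ hcover
    exact hgne i (LinearMap.ker_eq_top.mp hi)
  obtain ⟨x, hx⟩ := hker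
  refine ⟨fun j => ((j : ℝ) + 1) • (x : ∀ i, V i), fun j => U.smul_mem _ x.2, fun i => ?_⟩
  have hxi : (0 : ℝ) < |f i ((x : ∀ i, V i) i)| := by
    have := hx i
    simp only [hg, LinearMap.comp_apply, Submodule.subtype_apply] at this
    exact abs_pos.mpr this
  have : ∀ j : ℕ, |f i ((((j : ℝ) + 1) • (x : ∀ i, V i)) i)|
      = ((j : ℝ) + 1) * |f i ((x : ∀ i, V i) i)| := by
    intro j
    have h1 : (((j : ℝ) + 1) • (x : ∀ i, V i)) i = ((j : ℝ) + 1) • ((x : ∀ i, V i) i) := rfl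
    rw [h1, map_smul, smul_eq_mul, abs_mul, abs_of_pos (by positivity)]
  simp only [this]
  exact Tendsto.atTop_mul_const hxi
    (tendsto_atTop_add_const_right _ 1 tendsto_natCast_atTop_atTop)
end

section
/- Let R ⊆ ℝ^d be a (possibly rotated) rectangular box and let Q_t = {x ∈ ℝ^d : ‖x‖_∞ ≤ t}. If vol(Q_t ∩ R) ≥ (1/2)·vol(R), then R ⊆ Q_{5td}. -/
open MeasureTheory Set

/-- A box in `ℝ^d`: an isometric image of a product of closed intervals of
positive lengths. -/
def IsBox {d : ℕ} (R : Set (EuclideanSpace ℝ (Fin d))) : Prop :=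
  ∃ (f : EuclideanSpace ℝ (Fin d) ≃ᵢ EuclideanSpace ℝ (Fin d)) (a : Fin d → ℝ),
    (∀ i, 0 < a i) ∧ R = f '' {x | ∀ i, x i ∈ Icc 0 (a i)}

/-- The cube of "radius" `t` in the sup norm, centered at the origin. -/
def SupCube (d : ℕ) (t : ℝ) : Set (EuclideanSpace ℝ (Fin d)) :=
  {x | ∀ i, |x i| ≤ t}

lemma isometryEquiv_measurePreserving {d : ℕ}
    (f : EuclideanSpace ℝ (Fin d) ≃ᵢ EuclideanSpace ℝ (Fin d)) :
    MeasurePreserving f volume volume := by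
  have h1 := f.toRealLinearIsometryEquiv.measurePreserving
  have h2 := measurePreserving_add_right (volume : Measure (EuclideanSpace ℝ (Fin d))) (f 0)
  have : ⇑f = (fun y => y + f 0) ∘ ⇑f.toRealLinearIsometryEquiv := by
    funext x; simp [sub_add_cancel]
  rw [this]; exact h2.comp h1

lemma isometryEquiv_volume_image {d : ℕ}
    (f : EuclideanSpace ℝ (Fin d) ≃ᵢ EuclideanSpace ℝ (Fin d))
    (S : Set (EuclideanSpace ℝ (Fin d))) : volume (f '' S) = volume S := by
  have himg : f '' S = ⇑f.symm ⁻¹' S := by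
    ext x
    constructor
    · rintro ⟨y, hy, rfl⟩; simpa using hy
    · intro h; exact ⟨f.symm x, h, by simp⟩
  rw [himg]
  exact (isometryEquiv_measurePreserving f.symm).measure_preimage_emb
    f.symm.toHomeomorph.measurableEmbedding S

lemma euclidean_coord_dist_le {d : ℕ} (x y : EuclideanSpace ℝ (Fin d)) (i : Fin d) :
    |x i - y i| ≤ dist x y := by
  rw [EuclideanSpace.dist_eq, ← Real.dist_eq]
  have h1 : dist (x i) (y i) ^ 2 ≤ ∑ j, dist (x j) (y j) ^ 2 :=
    Finset.single_le_sum (f := fun j => dist (x j) (y j) ^ 2) (fun j _ => sq_nonneg _) (Finset.mem_univ i)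
  calc dist (x i) (y i) = Real.sqrt (dist (x i) (y i) ^ 2) := (Real.sqrt_sq dist_nonneg).symm
    _ ≤ _ := Real.sqrt_le_sqrt h1

lemma euclidean_dist_le_of_coord {d : ℕ} (x y : EuclideanSpace ℝ (Fin d)) {c : ℝ}
    (hc : 0 ≤ c) (h : ∀ i, |x i - y i| ≤ c) : dist x y ≤ c * Real.sqrt d := by
  rw [EuclideanSpace.dist_eq]
  have h1 : ∑ j, dist (x j) (y j) ^ 2 ≤ ∑ _j : Fin d, c ^ 2 := by
    refine Finset.sum_le_sum fun j _ => ?_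
    rw [Real.dist_eq]
    exact pow_le_pow_left₀ (abs_nonneg _) (h j) 2
  calc Real.sqrt (∑ j, dist (x j) (y j) ^ 2) ≤ Real.sqrt (∑ _j : Fin d, c ^ 2) :=
        Real.sqrt_le_sqrt h1
    _ = c * Real.sqrt d := by
        rw [Finset.sum_const, Finset.card_univ, Fintype.card_fin, nsmul_eq_mul,
          Real.sqrt_mul (Nat.cast_nonneg d), Real.sqrt_sq hc, mul_comm]

/-- If a box `R` has at least half of its volume inside `Q_t`, then
`R ⊆ Q_{5td}`. -/
theorem box_half_volume_in_cube_subset (d : ℕ) (hd : 1 ≤ d) (t : ℝ) (ht : 0 < t)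
    (R : Set (EuclideanSpace ℝ (Fin d))) (hR : IsBox R)
    (hvol : volume R ≤ 2 * volume (SupCube d t ∩ R)) :
    R ⊆ SupCube d (5 * t * d) := by
  obtain ⟨f, a, ha, rfl⟩ := hR
  set B : Set (EuclideanSpace ℝ (Fin d)) := {x | ∀ i, x i ∈ Icc 0 (a i)} with hB
  set e := (MeasurableEquiv.toLp 2 (Fin d → ℝ)).symm with he
  have hevol : ∀ A : Set (Fin d → ℝ), volume (⇑e ⁻¹' A) = volume A := fun A =>
    (EuclideanSpace.volume_preserving_symm_measurableEquiv_toLp (Fin d)).measure_preimage_emb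
      e.measurableEmbedding A
  -- volume of the box
  have hBpi : B = ⇑e ⁻¹' (Set.pi univ fun j => Icc 0 (a j)) := by
    ext x
    simp only [hB, Set.mem_preimage, Set.mem_pi, Set.mem_univ, true_implies, mem_setOf_eq]
    exact Iff.rfl
  have hvolB : volume B = ∏ j, ENNReal.ofReal (a j) := by
    rw [hBpi, hevol, volume_pi_pi]
    simp [Real.volume_Icc]
  have hvolR : volume (f '' B) = volume B := isometryEquiv_volume_image f B
  have hvolBpos : 0 < volume B := by
    rw [hvolB]
    exact CanonicallyOrderedAdd.prod_pos.2 fun j _ =>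
      ENNReal.ofReal_pos.2 (ha j)
  -- the intersection is nonempty
  have hIne : (SupCube d t ∩ f '' B).Nonempty := by
    by_contra hne
    rw [not_nonempty_iff_eq_empty] at hne
    rw [hne, measure_empty, mul_zero, hvolR] at hvol
    exact absurd (le_antisymm hvol hvolBpos.le) hvolBpos.ne'
  obtain ⟨q₀, hq₀Q, hq₀R⟩ := hIne
  set L : ℝ := 2 * t * Real.sqrt d with hL
  have hd0 : (0:ℝ) < d := by exact_mod_cast Nat.lt_of_lt_of_le Nat.zero_lt_one hd
  have hsd : 0 < Real.sqrt d := Real.sqrt_pos.2 hd0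
  have hLpos : 0 < L := by positivity
  -- the preimage of the intersection inside the box
  set T : Set (EuclideanSpace ℝ (Fin d)) := ⇑f.symm '' (SupCube d t ∩ f '' B) with hT
  have hTvol : volume T = volume (SupCube d t ∩ f '' B) :=
    isometryEquiv_volume_image f.symm _
  have hTB : T ⊆ B := by
    intro x ⟨p, ⟨_, hpR⟩, hpx⟩
    obtain ⟨b, hbB, hbp⟩ := hpR
    rwa [← hpx, ← hbp, IsometryEquiv.symm_apply_apply]
  -- any two points of T are within distance L
  have hTpair : ∀ u ∈ T, ∀ v ∈ T, dist u v ≤ L := by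
    rintro u ⟨p, ⟨hpQ, _⟩, rfl⟩ v ⟨q, ⟨hqQ, _⟩, rfl⟩
    rw [IsometryEquiv.dist_eq]
    refine euclidean_dist_le_of_coord p q (by positivity) fun j => ?_
    calc |p j - q j| ≤ |p j| + |q j| := abs_sub _ _
      _ ≤ t + t := add_le_add (hpQ j) (hqQ j)
      _ = 2 * t := by ring
  -- each side length is at most 2 * L
  have hside : ∀ i, a i ≤ 2 * L := by
    intro i
    set A : Set ℝ := (fun x : EuclideanSpace ℝ (Fin d) => x i) '' T with hA
    have hAne : A.Nonempty := by
      refine ⟨(f.symm q₀) i, ⟨f.symm q₀, ⟨q₀, ⟨hq₀Q, hq₀R⟩, rfl⟩, rfl⟩⟩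
    have hAbdd : BddBelow A := by
      refine ⟨0, fun u ⟨x, hxT, hxu⟩ => ?_⟩
      rw [← hxu]; exact (hTB hxT i).1
    set m : ℝ := sInf A with hm
    have hAsub : A ⊆ Icc m (m + L) := by
      rintro u ⟨x, hxT, rfl⟩
      refine ⟨csInf_le hAbdd ⟨x, hxT, rfl⟩, ?_⟩
      have : x i - L ≤ m := by
        refine le_csInf hAne ?_
        rintro v ⟨y, hyT, rfl⟩
        have h1 : |x i - y i| ≤ L :=
          le_trans (euclidean_coord_dist_le x y i) (hTpair x hxT y hyT)
        linarith [abs_le.1 h1]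
      linarith
    -- T is contained in a thin slab of the box
    have hTsub : T ⊆ ⇑e ⁻¹' (Set.pi univ
        (Function.update (fun j => Icc 0 (a j)) i (Icc m (m + L)))) := by
      intro x hxT
      intro j _
      rcases eq_or_ne j i with rfl | hj
      · rw [Function.update_self]
        exact hAsub ⟨x, hxT, rfl⟩
      · rw [Function.update_of_ne hj]
        exact hTB hxT j
    have hslab : volume T ≤ ENNReal.ofReal L * ∏ j ∈ Finset.univ.erase i,
        ENNReal.ofReal (a j) := by
      refine le_trans (measure_mono hTsub) ?_
      rw [hevol, volume_pi_pi]
      have hupd : ∀ j, volume (Function.update (fun j => Icc 0 (a j)) i (Icc m (m + L)) j)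
          = Function.update (fun j => volume (Icc 0 (a j))) i (volume (Icc m (m + L))) j :=
        fun j => Function.apply_update (fun _ s => volume s) _ i _ j
      simp only [hupd]
      rw [Finset.prod_update_of_mem (Finset.mem_univ i)]
      simp [Real.volume_Icc, Finset.sdiff_singleton_eq_erase]
    -- combine with the volume hypothesis
    have hfull : ENNReal.ofReal (a i) * ∏ j ∈ Finset.univ.erase i, ENNReal.ofReal (a j)
        ≤ (2 * ENNReal.ofReal L) * ∏ j ∈ Finset.univ.erase i, ENNReal.ofReal (a j) := by
      calc ENNReal.ofReal (a i) * ∏ j ∈ Finset.univ.erase i, ENNReal.ofReal (a j)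
          = ∏ j, ENNReal.ofReal (a j) := (Finset.mul_prod_erase _ (fun j => ENNReal.ofReal (a j)) (Finset.mem_univ i))
        _ = volume (f '' B) := by rw [hvolR, hvolB]
        _ ≤ 2 * volume (SupCube d t ∩ f '' B) := hvol
        _ = 2 * volume T := by rw [hTvol]
        _ ≤ 2 * (ENNReal.ofReal L * ∏ j ∈ Finset.univ.erase i, ENNReal.ofReal (a j)) := by
            exact mul_le_mul_right hslab 2
        _ = (2 * ENNReal.ofReal L) * ∏ j ∈ Finset.univ.erase i, ENNReal.ofReal (a j) := by
            ring
    have hP0 : (∏ j ∈ Finset.univ.erase i, ENNReal.ofReal (a j)) ≠ 0 := by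
      refine Finset.prod_ne_zero_iff.2 fun j _ => ?_
      exact (ENNReal.ofReal_pos.2 (ha j)).ne'
    have hPtop : (∏ j ∈ Finset.univ.erase i, ENNReal.ofReal (a j)) ≠ ⊤ := by
      refine (ENNReal.prod_lt_top fun j _ => ENNReal.ofReal_lt_top).ne
    have h1 : ENNReal.ofReal (a i) ≤ 2 * ENNReal.ofReal L :=
      (ENNReal.mul_le_mul_iff_left hP0 hPtop).1 hfull
    have h2 : ENNReal.ofReal (a i) ≤ ENNReal.ofReal (2 * L) := by
      rwa [ENNReal.ofReal_mul (by norm_num : (0:ℝ) ≤ 2), ENNReal.ofReal_ofNat]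
    exact (ENNReal.ofReal_le_ofReal_iff (by positivity)).1 h2
  -- finish: every point of R is within t + 4td of the origin in sup norm
  rintro x ⟨b, hbB, rfl⟩
  obtain ⟨c, hcB, hcq⟩ := hq₀R
  intro i
  have hdist : dist (f b) q₀ ≤ 2 * L * Real.sqrt d := by
    rw [← hcq, IsometryEquiv.dist_eq]
    refine euclidean_dist_le_of_coord b c (by positivity) fun j => ?_
    have h1 := hbB j
    have h2 := hcB j
    have := hside j
    rw [abs_le]
    constructor <;> [linarith [h1.1, h2.2]; linarith [h1.2, h2.1]]
  have hcoord : |f b i - q₀ i| ≤ 2 * L * Real.sqrt d :=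
    le_trans (euclidean_coord_dist_le _ _ i) hdist
  have hq0i : |q₀ i| ≤ t := hq₀Q i
  have hsq : Real.sqrt d * Real.sqrt d = d := Real.mul_self_sqrt (le_of_lt hd0)
  have hLd : 2 * L * Real.sqrt d = 4 * t * d := by
    rw [hL]; nlinarith [hsq]
  have htd : t ≤ t * d := le_mul_of_one_le_right ht.le (by exact_mod_cast hd)
  calc |f b i| ≤ |q₀ i| + |f b i - q₀ i| := by
        have := abs_sub_abs_le_abs_sub (f b i) (q₀ i); linarith [abs_sub_comm (f b i) (q₀ i)]
    _ ≤ t + 4 * t * d := by rw [← hLd]; exact add_le_add hq0i hcoord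
    _ ≤ 5 * t * d := by nlinarith
end

section
/- Let (X, R) be a range space with #X = n and VC-dimension at most d. Then the number of distinct ranges satisfies #{S ∩ X : S ∈ R} ≤ Σ_{i=0}^{d} C(n, i). -/
open Finset

/-- Sauer–Shelah lemma: a range space on `n` points of VC-dimension at most
`d` has at most `Σ_{i=0}^d C(n,i)` ranges. -/
theorem sauer_shelah_ncard_ranges (X : Type*) [Fintype X]
    (R : Set (Set X)) (d : ℕ)
    (hVC : ∀ F : Finset X,
      (∀ G ⊆ F, ∃ S ∈ R, (↑F ∩ S : Set X) = ↑G) → F.card ≤ d) :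
    R.ncard ≤ ∑ i ∈ Finset.range (d + 1), (Fintype.card X).choose i := by
  classical
  set 𝒜 : Finset (Finset X) :=
    (R.toFinset).image (fun S => S.toFinset) with h𝒜
  have hcard : R.ncard = 𝒜.card := by
    rw [h𝒜, Finset.card_image_of_injective _ (fun S T h => by
      simpa using congrArg (fun t : Finset X => (↑t : Set X)) h)]
    rw [Set.ncard_eq_toFinset_card']
  have hvc : 𝒜.vcDim ≤ d := by
    refine Finset.sup_le fun F hF => ?_
    rw [Finset.mem_shatterer] at hF
    refine hVC F fun G hG => ?_
    obtain ⟨u, hu, hFu⟩ := hF hG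
    rw [h𝒜, Finset.mem_image] at hu
    obtain ⟨S, hS, rfl⟩ := hu
    refine ⟨S, Set.mem_toFinset.1 hS, ?_⟩
    have := congrArg (fun t : Finset X => (↑t : Set X)) hFu
    simpa using this
  rw [hcard]
  calc 𝒜.card ≤ 𝒜.shatterer.card := Finset.card_le_card_shatterer 𝒜
    _ ≤ ∑ k ∈ Finset.Iic 𝒜.vcDim, (Fintype.card X).choose k :=
        Finset.card_shatterer_le_sum_vcDim
    _ ≤ ∑ i ∈ Finset.range (d + 1), (Fintype.card X).choose i := by
        have : Finset.range (d+1) = Finset.Iic d := by ext x; simp [Nat.lt_succ_iff]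
        rw [this]
        exact Finset.sum_le_sum_of_subset (Finset.Iic_subset_Iic.2 hvc)
end

section
/- Let (X, R) be a range space of VC-dimension d, and let R_k = {s_1 ∩ ⋯ ∩ s_k : s_i ∈ R}. Then the VC-dimension of (X, R_k) is at most 2dk·log(dk). -/
set_option maxHeartbeats 1000000

open Set

/-- A finite set `F` is shattered by a family `R` if every subset of `F`
is cut out by a member of `R`. -/
def Shattered {α : Type*} (R : Set (Set α)) (F : Finset α) : Prop :=
  ∀ G ⊆ F, ∃ S ∈ R, (↑F ∩ S : Set α) = ↑G

section AuxArith

private lemma two_pow_le_fact : ∀ k : ℕ, 2 ^ (k - 1) ≤ k.factorial := by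
  intro k
  induction k with
  | zero => simp
  | succ k ih =>
    cases k with
    | zero => simp [Nat.factorial]
    | succ j =>
      have h : 2 ^ (j + 1) = 2 * 2 ^ j := by ring
      rw [Nat.succ_sub_one] at *
      calc 2 ^ (j + 1) = 2 * 2 ^ j := h
        _ ≤ (j + 2) * (j + 1).factorial := Nat.mul_le_mul (by omega) ih
        _ = (j + 2).factorial := rfl

private lemma nat_L2 : ∀ n, 5 ≤ n → (n + 1) ^ 8 < 2 ^ (4 * n + 1) := by
  intro n hn
  induction n, hn using Nat.le_induction with
  | base => norm_num
  | succ n hn ih =>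
    have h1 : (n + 2) ^ 2 ≤ 2 * (n + 1) ^ 2 := by nlinarith
    have h2 : (n + 2) ^ 8 ≤ 16 * (n + 1) ^ 8 := by
      calc (n + 2) ^ 8 = ((n + 2) ^ 2) ^ 4 := by ring
        _ ≤ (2 * (n + 1) ^ 2) ^ 4 := Nat.pow_le_pow_left h1 4
        _ = 16 * (n + 1) ^ 8 := by ring
    calc (n + 1 + 1) ^ 8 ≤ 16 * (n + 1) ^ 8 := h2
      _ < 16 * 2 ^ (4 * n + 1) := (Nat.mul_lt_mul_left (by norm_num)).mpr ih
      _ = 2 ^ (4 * (n + 1) + 1) := by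
          rw [show 4 * (n + 1) + 1 = (4 * n + 1) + 4 by ring, pow_add]; ring

private lemma nat_L3 : ∀ n, 10 ≤ n → (n + 1) ^ 12 < 2 ^ (4 * n + 2) := by
  intro n hn
  induction n, hn using Nat.le_induction with
  | base => norm_num
  | succ n hn ih =>
    have hnn : 100 ≤ n * n := le_trans (by norm_num) (Nat.mul_le_mul hn hn)
    have h1 : (n + 2) ^ 3 ≤ 2 * (n + 1) ^ 3 := by nlinarith
    have h2 : (n + 2) ^ 12 ≤ 16 * (n + 1) ^ 12 := by
      calc (n + 2) ^ 12 = ((n + 2) ^ 3) ^ 4 := by ring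
        _ ≤ (2 * (n + 1) ^ 3) ^ 4 := Nat.pow_le_pow_left h1 4
        _ = 16 * (n + 1) ^ 12 := by ring
    calc (n + 1 + 1) ^ 12 ≤ 16 * (n + 1) ^ 12 := h2
      _ < 16 * 2 ^ (4 * n + 2) := (Nat.mul_lt_mul_left (by norm_num)).mpr ih
      _ = 2 ^ (4 * (n + 1) + 2) := by
          rw [show 4 * (n + 1) + 2 = (4 * n + 2) + 4 by ring, pow_add]; ring

private lemma nat_L4 : ∀ n, 17 ≤ n → (n + 1) ^ 16 < 2 ^ (4 * n + 1) := by
  intro n hn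
  induction n, hn using Nat.le_induction with
  | base => norm_num
  | succ n hn ih =>
    have hnn : 289 ≤ n * n := le_trans (by norm_num) (Nat.mul_le_mul hn hn)
    have h1 : (n + 2) ^ 4 ≤ 2 * (n + 1) ^ 4 := by nlinarith
    have h2 : (n + 2) ^ 16 ≤ 16 * (n + 1) ^ 16 := by
      calc (n + 2) ^ 16 = ((n + 2) ^ 4) ^ 4 := by ring
        _ ≤ (2 * (n + 1) ^ 4) ^ 4 := Nat.pow_le_pow_left h1 4
        _ = 16 * (n + 1) ^ 16 := by ring
    calc (n + 1 + 1) ^ 16 ≤ 16 * (n + 1) ^ 16 := h2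
      _ < 16 * 2 ^ (4 * n + 1) := (Nat.mul_lt_mul_left (by norm_num)).mpr ih
      _ = 2 ^ (4 * (n + 1) + 1) := by
          rw [show 4 * (n + 1) + 1 = (4 * n + 1) + 4 by ring, pow_add]; ring

private lemma nat_L6b : ∀ m, 6 ≤ m → m ^ 4 ≤ 2 ^ (2 * m - 1) := by
  intro m hm
  induction m, hm using Nat.le_induction with
  | base => norm_num
  | succ m hm ih =>
    have h1 : (m + 1) ^ 2 ≤ 2 * m ^ 2 := by nlinarith
    have h2 : (m + 1) ^ 4 ≤ 4 * m ^ 4 := by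
      calc (m + 1) ^ 4 = ((m + 1) ^ 2) ^ 2 := by ring
        _ ≤ (2 * m ^ 2) ^ 2 := Nat.pow_le_pow_left h1 2
        _ = 4 * m ^ 4 := by ring
    calc (m + 1) ^ 4 ≤ 4 * m ^ 4 := h2
      _ ≤ 4 * 2 ^ (2 * m - 1) := Nat.mul_le_mul_left 4 ih
      _ = 2 ^ (2 * (m + 1) - 1) := by
          rw [show 2 * (m + 1) - 1 = (2 * m - 1) + 2 by omega, pow_add]; ring

private lemma nat_L6 (m : ℕ) (hm : 5 ≤ m) : m ^ (8 * m) ≤ 2 ^ (4 * m ^ 2 - 2) := by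
  rcases eq_or_lt_of_le hm with h | h
  · subst h; norm_num
  · have hm6 : 6 ≤ m := h
    calc m ^ (8 * m) = (m ^ 4) ^ (2 * m) := by rw [← pow_mul]; ring_nf
      _ ≤ (2 ^ (2 * m - 1)) ^ (2 * m) := Nat.pow_le_pow_left (nat_L6b m hm6) _
      _ = 2 ^ ((2 * m - 1) * (2 * m)) := by rw [← pow_mul]
      _ ≤ 2 ^ (4 * m ^ 2 - 2) := by
          apply Nat.pow_le_pow_right (by norm_num)
          obtain ⟨j, rfl⟩ : ∃ j, m = j + 5 := ⟨m - 5, by omega⟩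
          have h9 : 2 * (j + 5) - 1 = 2 * j + 9 := by omega
          have h4 : 4 * (j + 5) ^ 2 = 4 * j ^ 2 + 40 * j + 100 := by ring
          have h2 : 4 * (j + 5) ^ 2 - 2 = 4 * j ^ 2 + 40 * j + 98 := by omega
          rw [h9, h2]
          nlinarith

private lemma exp_half_lt_two : Real.exp (1 / 2) < 2 := by
  nlinarith [Real.exp_one_lt_d9, Real.exp_pos (1 / 2 : ℝ),
    (by rw [← Real.exp_nat_mul]; norm_num : Real.exp (1 / 2) ^ (2 : ℕ) = Real.exp 1)]

private lemma real_L7 (m a : ℕ) (hm : 1 ≤ m) (ha : 2 * m ≤ a) :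
    ((a : ℝ) + 1) ^ m ≤ 2 * (a : ℝ) ^ m := by
  have hapos : (0 : ℝ) < a := by
    have : 2 ≤ a := le_trans (by omega) ha
    exact_mod_cast Nat.lt_of_lt_of_le (by norm_num) this
  have h1 : (a : ℝ) + 1 ≤ (a : ℝ) * Real.exp (1 / (a : ℝ)) := by
    have := Real.add_one_le_exp (1 / (a : ℝ))
    have h2 : (a : ℝ) * (1 / (a : ℝ) + 1) ≤ (a : ℝ) * Real.exp (1 / (a : ℝ)) :=
      mul_le_mul_of_nonneg_left this (le_of_lt hapos)
    calc (a : ℝ) + 1 = (a : ℝ) * (1 / (a : ℝ) + 1) := by field_simp; ring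
      _ ≤ _ := h2
  calc ((a : ℝ) + 1) ^ m ≤ ((a : ℝ) * Real.exp (1 / (a : ℝ))) ^ m := by
        apply pow_le_pow_left₀ (by positivity) h1
    _ = (a : ℝ) ^ m * Real.exp (1 / (a : ℝ)) ^ m := mul_pow _ _ _
    _ = (a : ℝ) ^ m * Real.exp (m / (a : ℝ)) := by
        rw [← Real.exp_nat_mul]; ring_nf
    _ ≤ (a : ℝ) ^ m * Real.exp (1 / 2) := by
        apply mul_le_mul_of_nonneg_left _ (by positivity)
        apply Real.exp_le_exp.2
        rw [div_le_div_iff₀ hapos (by norm_num)]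
        have haR : (2 : ℝ) * (m : ℝ) ≤ (a : ℝ) := by exact_mod_cast ha
        linarith
    _ ≤ 2 * (a : ℝ) ^ m := by
        rw [mul_comm]
        exact mul_le_mul_of_nonneg_right (le_of_lt exp_half_lt_two) (by positivity)

private lemma nat_L7 (m n : ℕ) (hm : 1 ≤ m) (h : 2 * m ≤ n + 1) :
    (n + 2) ^ m ≤ 2 * (n + 1) ^ m := by
  have := real_L7 m (n + 1) hm h
  exact_mod_cast (by push_cast at this ⊢; convert this using 2 <;> ring :
    ((n : ℝ) + 2) ^ m ≤ 2 * ((n : ℝ) + 1) ^ m)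

private lemma nat_L5_base (m : ℕ) (hm : 5 ≤ m) : (m ^ 2 + 1) ^ (4 * m) < 2 ^ (4 * m ^ 2 + 1) := by
  have hmR : (5 : ℝ) ≤ (m : ℝ) := by exact_mod_cast hm
  have hm2pos : (0 : ℝ) < (m : ℝ) ^ 2 := by positivity
  have key : ((m : ℝ) ^ 2 + 1) ^ (4 * m) < 2 ^ (4 * m ^ 2 + 1) := by
    have h1 : ((m : ℝ) ^ 2 + 1) ≤ (m : ℝ) ^ 2 * Real.exp (1 / (m : ℝ) ^ 2) := by
      have h := Real.add_one_le_exp (1 / (m : ℝ) ^ 2)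
      have := mul_le_mul_of_nonneg_left h (le_of_lt hm2pos)
      calc ((m : ℝ) ^ 2 + 1) = (m : ℝ) ^ 2 * (1 / (m : ℝ) ^ 2 + 1) := by field_simp; ring
        _ ≤ _ := this
    have h2 : ((m : ℝ) ^ 2 + 1) ^ (4 * m)
        ≤ ((m : ℝ) ^ 2) ^ (4 * m) * Real.exp ((4 * m : ℕ) / (m : ℝ) ^ 2) := by
      calc ((m : ℝ) ^ 2 + 1) ^ (4 * m) ≤ ((m : ℝ) ^ 2 * Real.exp (1 / (m : ℝ) ^ 2)) ^ (4 * m) :=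
            pow_le_pow_left₀ (by positivity) h1 _
        _ = ((m : ℝ) ^ 2) ^ (4 * m) * Real.exp (1 / (m : ℝ) ^ 2) ^ (4 * m) := mul_pow _ _ _
        _ = ((m : ℝ) ^ 2) ^ (4 * m) * Real.exp ((4 * m : ℕ) / (m : ℝ) ^ 2) := by
            rw [← Real.exp_nat_mul]; ring_nf
    have h3 : Real.exp ((4 * m : ℕ) / (m : ℝ) ^ 2) ≤ Real.exp 1 := by
      apply Real.exp_le_exp.2
      rw [div_le_one hm2pos]
      push_cast
      nlinarith
    have h4 : ((m : ℝ) ^ 2) ^ (4 * m) = (m : ℝ) ^ (8 * m) := by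
      rw [← pow_mul]; ring_nf
    have h5 : (m : ℝ) ^ (8 * m) ≤ 2 ^ (4 * m ^ 2 - 2) := by
      exact_mod_cast Nat.cast_le.2 (nat_L6 m hm)
    have h6 : (2 : ℝ) ^ (4 * m ^ 2 - 2) * 4 = 2 ^ (4 * m ^ 2) := by
      rw [show (4 : ℝ) = 2 ^ (2 : ℕ) by norm_num, ← pow_add]
      congr 1
      have h25 : 25 ≤ m ^ 2 := by calc 25 = 5 ^ 2 := by norm_num
                                    _ ≤ m ^ 2 := Nat.pow_le_pow_left hm 2
      omega
    have hexp1 : Real.exp 1 < 4 := by nlinarith [Real.exp_one_lt_d9]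
    calc ((m : ℝ) ^ 2 + 1) ^ (4 * m) ≤ (m : ℝ) ^ (8 * m) * Real.exp ((4 * m : ℕ) / (m : ℝ) ^ 2) := by
          rw [← h4]; exact h2
      _ ≤ (m : ℝ) ^ (8 * m) * Real.exp 1 :=
          mul_le_mul_of_nonneg_left h3 (by positivity)
      _ < (m : ℝ) ^ (8 * m) * 4 := by
          apply mul_lt_mul_of_pos_left hexp1 (by positivity)
      _ ≤ 2 ^ (4 * m ^ 2 - 2) * 4 :=
          mul_le_mul_of_nonneg_right h5 (by norm_num)
      _ = 2 ^ (4 * m ^ 2) := h6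
      _ < 2 ^ (4 * m ^ 2 + 1) := by
          apply pow_lt_pow_right₀ (by norm_num) (by omega)
  exact_mod_cast key

private lemma nat_L5 (m : ℕ) (hm : 5 ≤ m) :
    ∀ n, m ^ 2 ≤ n → (n + 1) ^ (4 * m) < 2 ^ (4 * n + 1) := by
  intro n hn
  induction n, hn using Nat.le_induction with
  | base => exact nat_L5_base m hm
  | succ n hn ih =>
    have hm1 : 1 ≤ m := by omega
    have h2m : 2 * m ≤ n + 1 := by nlinarith
    have h1 : (n + 2) ^ m ≤ 2 * (n + 1) ^ m := nat_L7 m n hm1 h2m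
    have h2 : (n + 2) ^ (4 * m) ≤ 16 * (n + 1) ^ (4 * m) := by
      calc (n + 2) ^ (4 * m) = ((n + 2) ^ m) ^ 4 := by rw [← pow_mul]; ring_nf
        _ ≤ (2 * (n + 1) ^ m) ^ 4 := Nat.pow_le_pow_left h1 4
        _ = 16 * ((n + 1) ^ m) ^ 4 := by ring
        _ = 16 * (n + 1) ^ (4 * m) := by rw [← pow_mul]; ring_nf
    calc (n + 1 + 1) ^ (4 * m) = (n + 2) ^ (4 * m) := by ring_nf
      _ ≤ 16 * (n + 1) ^ (4 * m) := h2
      _ < 16 * 2 ^ (4 * n + 1) := (Nat.mul_lt_mul_left (by norm_num)).mpr ih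
      _ = 2 ^ (4 * (n + 1) + 1) := by
          rw [show 4 * (n + 1) + 1 = (4 * n + 1) + 4 by ring, pow_add]; ring

private lemma logb_bridge {m n c : ℕ} (h : (n + 1) ^ (4 * m) < 2 ^ (4 * n + c)) :
    (m : ℝ) * Real.logb 2 ((n : ℝ) + 1) < (n : ℝ) + (c : ℝ) / 4 := by
  have hR : ((n : ℝ) + 1) ^ (4 * m) < (2 : ℝ) ^ (4 * n + c) := by exact_mod_cast h
  have hlt := Real.logb_lt_logb (b := 2) (by norm_num) (by positivity) hR
  rw [Real.logb_pow, Real.logb_pow, Real.logb_self_eq_one (by norm_num)] at hlt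
  push_cast at hlt
  linarith

private lemma logb_one_add_le {u : ℝ} (hu : 0 ≤ u) : Real.logb 2 (1 + u) ≤ 3 / 2 * u := by
  have hlog2 : (2 : ℝ) / 3 ≤ Real.log 2 := by
    have := Real.log_two_gt_d9
    linarith
  have hlogpos : (0 : ℝ) < Real.log 2 := by linarith
  have h1 : Real.log (1 + u) ≤ u := by
    have := Real.log_le_sub_one_of_pos (show (0:ℝ) < 1 + u by linarith)
    linarith
  rw [Real.logb, div_le_iff₀ hlogpos]
  have h2 : u * (2 / 3) ≤ u * Real.log 2 := mul_le_mul_of_nonneg_left hlog2 hu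
  nlinarith

private lemma dagger (d k n : ℕ) (hd : 1 ≤ d) (hk : 2 ≤ k) (hn : 2 * (d * k) + 1 ≤ n)
    (H : k.factorial * 2 ^ n ≤ ((n + 1) ^ d + 1) * ((n + 1) ^ d + k) ^ (k - 1)) :
    (n : ℝ) + ((k : ℝ) - 1) / 4 ≤ ((d : ℝ) * (k : ℝ)) * Real.logb 2 ((n : ℝ) + 1) := by
  set x : ℝ := (n : ℝ) + 1 with hxdef
  have hn0 : (0 : ℝ) ≤ (n : ℝ) := Nat.cast_nonneg n
  have hx1 : (1 : ℝ) ≤ x := by rw [hxdef]; linarith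
  have hxpos : (0 : ℝ) < x := by linarith
  set t : ℝ := x ^ d with htdef
  have hxt : x ≤ t := le_self_pow₀ hx1 (by omega)
  have htpos : (0 : ℝ) < t := by positivity
  have hkR : (2 : ℝ) ≤ (k : ℝ) := by exact_mod_cast hk
  have hm : 2 * ((d : ℝ) * k) + 1 ≤ (n : ℝ) := by exact_mod_cast hn
  have hdk : (k : ℝ) ≤ (d : ℝ) * k := by
    have : (1 : ℝ) ≤ (d : ℝ) := by exact_mod_cast hd
    nlinarith
  have hxlarge : 2 * (k : ℝ) + 2 ≤ x := by rw [hxdef]; linarith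
  have htx : (1 : ℝ) ≤ t / x := (one_le_div hxpos).2 hxt
  have hA : t + 1 ≤ t * (1 + 1 / x) := by
    have : t * (1 + 1 / x) = t + t / x := by ring
    linarith
  have hB : t + k ≤ t * (1 + k / x) := by
    have e : t * (1 + k / x) = t + (k : ℝ) * (t / x) := by ring
    have : (k : ℝ) * 1 ≤ (k : ℝ) * (t / x) :=
      mul_le_mul_of_nonneg_left htx (by linarith)
    linarith
  have hH : (k.factorial : ℝ) * 2 ^ n ≤ (t + 1) * (t + k) ^ (k - 1) := by
    have hcast : ((k.factorial * 2 ^ n : ℕ) : ℝ)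
        ≤ ((((n + 1) ^ d + 1) * ((n + 1) ^ d + k) ^ (k - 1) : ℕ) : ℝ) := Nat.cast_le.2 H
    push_cast at hcast
    convert hcast using 2 <;> rw [htdef, hxdef]
  have p1 : (0 : ℝ) < 1 + 1 / x := by positivity
  have p2 : (0 : ℝ) < 1 + (k : ℝ) / x := by positivity
  have hmain : (k.factorial : ℝ) * 2 ^ n ≤ t ^ k * ((1 + 1 / x) * (1 + k / x) ^ (k - 1)) := by
    have h1 : (t + 1) * (t + k) ^ (k - 1) ≤ (t * (1 + 1 / x)) * (t * (1 + k / x)) ^ (k - 1) := by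
      apply mul_le_mul hA (pow_le_pow_left₀ (by positivity) hB _) (by positivity) (by positivity)
    have h2 : (t * (1 + 1 / x)) * (t * (1 + k / x)) ^ (k - 1)
        = t ^ k * ((1 + 1 / x) * (1 + k / x) ^ (k - 1)) := by
      rw [mul_pow]
      rw [show t * (1 + 1 / x) * (t ^ (k - 1) * (1 + k / x) ^ (k - 1))
            = (t * t ^ (k - 1)) * ((1 + 1 / x) * (1 + k / x) ^ (k - 1)) by ring]
      congr 2
      rw [← pow_succ']
      congr 1
      omega
    linarith [hH, h1, h2.symm.le]
  have hfactpos : (0 : ℝ) < (k.factorial : ℝ) := by exact_mod_cast k.factorial_pos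
  have hLHS : Real.logb 2 ((k.factorial : ℝ) * 2 ^ n) = Real.logb 2 (k.factorial : ℝ) + n := by
    rw [Real.logb_mul (ne_of_gt hfactpos) (by positivity), Real.logb_pow,
      Real.logb_self_eq_one (by norm_num)]
    ring
  have hck : ((k - 1 : ℕ) : ℝ) = (k : ℝ) - 1 := by
    have h1 : 1 ≤ k := by omega
    push_cast [h1]
    ring
  have hlogmono := Real.logb_le_logb_of_le (b := 2) (by norm_num) (by positivity) hmain
  rw [hLHS, Real.logb_mul (by positivity) (by positivity),
    Real.logb_mul (ne_of_gt p1) (by positivity),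
    Real.logb_pow, Real.logb_pow, Real.logb_pow, hck] at hlogmono
  have he1 : Real.logb 2 (1 + 1 / x) ≤ 3 / 2 * (1 / x) := logb_one_add_le (by positivity)
  have he2 : Real.logb 2 (1 + (k : ℝ) / x) ≤ 3 / 2 * ((k : ℝ) / x) := logb_one_add_le (by positivity)
  have hfact : (k : ℝ) - 1 ≤ Real.logb 2 (k.factorial : ℝ) := by
    have h2pR : ((2 : ℝ)) ^ (k - 1 : ℕ) ≤ (k.factorial : ℝ) := by
      exact_mod_cast two_pow_le_fact k
    have hlb := Real.logb_le_logb_of_le (b := 2) (by norm_num) (by positivity) h2pR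
    rw [Real.logb_pow, Real.logb_self_eq_one (by norm_num), hck, mul_one] at hlb
    exact hlb
  have herr : 3 / 2 * (1 / x) + ((k : ℝ) - 1) * (3 / 2 * ((k : ℝ) / x))
      ≤ 3 / 4 * ((k : ℝ) - 1) := by
    have e : 3 / 2 * (1 / x) + ((k : ℝ) - 1) * (3 / 2 * ((k : ℝ) / x))
        = 3 / 2 * (1 + ((k : ℝ) - 1) * k) * (1 / x) := by ring
    have h1x : 1 / x ≤ 1 / (2 * (k : ℝ) + 2) :=
      one_div_le_one_div_of_le (by linarith) hxlarge
    have hnum : (0 : ℝ) ≤ 3 / 2 * (1 + ((k : ℝ) - 1) * k) := by nlinarith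
    have h2 : 3 / 2 * (1 + ((k : ℝ) - 1) * k) * (1 / x)
        ≤ 3 / 2 * (1 + ((k : ℝ) - 1) * k) * (1 / (2 * (k : ℝ) + 2)) :=
      mul_le_mul_of_nonneg_left h1x hnum
    have h3 : 3 / 2 * (1 + ((k : ℝ) - 1) * k) * (1 / (2 * (k : ℝ) + 2)) ≤ 3 / 4 * ((k : ℝ) - 1) := by
      rw [mul_one_div, div_le_iff₀ (by linarith)]
      nlinarith
    linarith [e.le]
  have hmulpos : ((k : ℝ) - 1) * Real.logb 2 (1 + (k : ℝ) / x)
      ≤ ((k : ℝ) - 1) * (3 / 2 * ((k : ℝ) / x)) :=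
    mul_le_mul_of_nonneg_left he2 (by linarith)
  linarith [hlogmono, hfact, he1, herr, hmulpos]

private lemma logb_two_three : (19 : ℝ) / 12 < Real.logb 2 3 := by
  have hl2 : (0 : ℝ) < Real.log 2 := Real.log_pos (by norm_num)
  rw [Real.logb, lt_div_iff₀ hl2]
  have h : Real.log (2 ^ (19 : ℕ)) < Real.log (3 ^ (12 : ℕ)) :=
    Real.log_lt_log (by positivity) (by norm_num)
  rw [Real.log_pow, Real.log_pow] at h
  push_cast at h
  linarith

private lemma analytic_main (d k n : ℕ) (hd : 1 ≤ d) (hk : 2 ≤ k)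
    (H : k.factorial * 2 ^ n ≤ ((n + 1) ^ d + 1) * ((n + 1) ^ d + k) ^ (k - 1)) :
    (n : ℝ) ≤ 2 * (d : ℝ) * (k : ℝ) * Real.logb 2 ((d : ℝ) * (k : ℝ)) := by
  by_contra hcon
  push_neg at hcon
  have hm2 : 2 ≤ d * k := by nlinarith
  have hmcast : ((d * k : ℕ) : ℝ) = (d : ℝ) * k := by push_cast; ring
  have hm2R : (2 : ℝ) ≤ (d : ℝ) * k := by rw [← hmcast]; exact_mod_cast hm2
  have hlogm : (1 : ℝ) ≤ Real.logb 2 ((d : ℝ) * k) := by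
    have := Real.logb_le_logb_of_le (b := 2) (by norm_num) (by norm_num : (0:ℝ) < 2) hm2R
    rwa [Real.logb_self_eq_one (by norm_num)] at this
  have hn2m : 2 * (d * k) + 1 ≤ n := by
    have h1 : 2 * ((d : ℝ) * k) < (n : ℝ) := by nlinarith
    have h2 : 2 * (d * k) < n := by
      have h3 : ((2 * (d * k) : ℕ) : ℝ) < (n : ℝ) := by push_cast; linarith
      exact_mod_cast h3
    exact h2
  have hdag := dagger d k n hd hk hn2m H
  have hkm : k ≤ d * k := Nat.le_mul_of_pos_left k (by omega)
  rcases le_or_gt 5 (d * k) with hm5 | hm4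
  · rcases le_or_gt ((d * k) ^ 2) n with hbig | hsmall
    · have hnat := nat_L5 (d * k) hm5 n hbig
      have hbr := logb_bridge hnat
      rw [hmcast] at hbr
      push_cast at hbr
      have hk1 : (1 : ℝ) ≤ ((k : ℝ) - 1) := by
        have : (2 : ℝ) ≤ (k : ℝ) := by exact_mod_cast hk
        linarith
      linarith
    · have hn1 : (n : ℝ) + 1 ≤ ((d * k : ℕ) : ℝ) ^ 2 := by
        have h : n + 1 ≤ (d * k) ^ 2 := hsmall
        exact_mod_cast (by exact_mod_cast h : ((n + 1 : ℕ) : ℝ) ≤ (((d * k) ^ 2 : ℕ) : ℝ))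
      have hmono : Real.logb 2 ((n : ℝ) + 1) ≤ Real.logb 2 (((d * k : ℕ) : ℝ) ^ 2) :=
        Real.logb_le_logb_of_le (by norm_num) (by positivity) hn1
      rw [Real.logb_pow, hmcast] at hmono
      have hk1 : (1 : ℝ) ≤ ((k : ℝ) - 1) := by
        have : (2 : ℝ) ≤ (k : ℝ) := by exact_mod_cast hk
        linarith
      have hmpos : (0 : ℝ) ≤ (d : ℝ) * k := by positivity
      push_cast at hmono
      have hprod := mul_le_mul_of_nonneg_left hmono hmpos
      linarith [hdag, hprod, hcon]
  · have hd2 : d ≤ 2 := by nlinarith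
    have hk4 : k ≤ 4 := by omega
    have l22 : Real.logb 2 2 = 1 := Real.logb_self_eq_one (by norm_num)
    have l24 : Real.logb 2 4 = 2 := by
      rw [show (4:ℝ) = 2 ^ (2:ℕ) by norm_num, Real.logb_pow, l22]; norm_num
    interval_cases d <;> interval_cases k
    · -- d = 1, k = 2
      push_cast at hcon hdag
      norm_num [l22] at hcon hdag
      have h5 : 5 ≤ n := by
        have : 4 < n := by exact_mod_cast hcon
        omega
      have hnat : (n + 1) ^ (4 * 2) < 2 ^ (4 * n + 1) := by
        have := nat_L2 n h5
        norm_num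
        convert this using 2
      have hbr := logb_bridge hnat
      push_cast at hbr
      linarith
    · -- d = 1, k = 3
      push_cast at hcon hdag
      norm_num at hcon hdag
      have h10 : 10 ≤ n := by
        have h1 : (9.5 : ℝ) < (n : ℝ) := by nlinarith [logb_two_three, hcon]
        by_contra hle
        push_neg at hle
        have : (n : ℝ) ≤ 9 := by exact_mod_cast Nat.le_of_lt_succ hle
        linarith
      have hnat : (n + 1) ^ (4 * 3) < 2 ^ (4 * n + 2) := by
        have := nat_L3 n h10
        norm_num
        convert this using 2
      have hbr := logb_bridge hnat
      push_cast at hbr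
      linarith
    · -- d = 1, k = 4
      push_cast at hcon hdag
      norm_num [l24] at hcon hdag
      have h17 : 17 ≤ n := by
        have : 16 < n := by exact_mod_cast hcon
        omega
      have hnat : (n + 1) ^ (4 * 4) < 2 ^ (4 * n + 1) := by
        have := nat_L4 n h17
        norm_num
        convert this using 2
      have hbr := logb_bridge hnat
      push_cast at hbr
      linarith
    · -- d = 2, k = 2
      push_cast at hcon hdag
      norm_num [l24] at hcon hdag
      have h17 : 17 ≤ n := by
        have : 16 < n := by exact_mod_cast hcon
        omega
      have hnat : (n + 1) ^ (4 * 4) < 2 ^ (4 * n + 1) := by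
        have := nat_L4 n h17
        norm_num
        convert this using 2
      have hbr := logb_bridge hnat
      push_cast at hbr
      linarith
    · omega
    · omega

end AuxArith

section AuxComb

private lemma filter_card_le_sum_choose {X : Type*} [DecidableEq X] (F : Finset X) (d : ℕ)
    (p : Finset X → Prop) [DecidablePred p] (hp : ∀ s, p s → s.card ≤ d) :
    (F.powerset.filter p).card ≤ ∑ i ∈ Finset.range (d + 1), F.card.choose i := by
  have hsub : F.powerset.filter p ⊆ (Finset.range (d + 1)).biUnion (fun i => F.powersetCard i) := by
    intro s hs
    simp only [Finset.mem_filter, Finset.mem_powerset] at hs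
    simp only [Finset.mem_biUnion, Finset.mem_range, Finset.mem_powersetCard]
    exact ⟨s.card, by have := hp s hs.2; omega, hs.1, rfl⟩
  calc (F.powerset.filter p).card ≤ _ := Finset.card_le_card hsub
    _ ≤ ∑ i ∈ Finset.range (d + 1), (F.powersetCard i).card := Finset.card_biUnion_le
    _ = ∑ i ∈ Finset.range (d + 1), F.card.choose i := by
        apply Finset.sum_congr rfl
        intro i _
        rw [Finset.card_powersetCard]

private lemma sum_choose_le_pow (d n : ℕ) :
    ∑ i ∈ Finset.range (d + 1), n.choose i ≤ (n + 1) ^ d := by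
  have hb : (n + 1) ^ d = ∑ i ∈ Finset.range (d + 1), n ^ i * 1 ^ (d - i) * d.choose i :=
    add_pow n 1 d
  rw [hb]
  apply Finset.sum_le_sum
  intro i hi
  simp only [one_pow, mul_one]
  have h1 : n.choose i ≤ n ^ i := Nat.choose_le_pow n i
  have h2 : 0 < d.choose i := Nat.choose_pos (by simp only [Finset.mem_range] at hi; omega)
  calc n.choose i ≤ n ^ i := h1
    _ = n ^ i * 1 := (mul_one _).symm
    _ ≤ n ^ i * d.choose i := Nat.mul_le_mul_left _ h2

private lemma sum_choose_le_add_choose (k a : ℕ) :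
    ∑ j ∈ Finset.range (k + 1), a.choose j ≤ (a + k).choose k := by
  rw [Nat.add_choose_eq, Finset.Nat.sum_antidiagonal_eq_sum_range_succ_mk]
  apply Finset.sum_le_sum
  intro j hj
  have hjk : j ≤ k := by simp only [Finset.mem_range] at hj; omega
  have hpos : 0 < k.choose (k - j) := Nat.choose_pos (by omega)
  calc a.choose j = a.choose j * 1 := (mul_one _).symm
    _ ≤ a.choose j * k.choose (k - j) := Nat.mul_le_mul_left _ hpos

private lemma fact_mul_choose_le (a k : ℕ) (hk : 1 ≤ k) :
    k.factorial * ((a + k).choose k) ≤ (a + 1) * (a + k) ^ (k - 1) := by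
  rw [← Nat.descFactorial_eq_factorial_mul_choose]
  obtain ⟨j, rfl⟩ : ∃ j, k = j + 1 := ⟨k - 1, by omega⟩
  rw [Nat.descFactorial_succ]
  have h1 : a + (j + 1) - j = a + 1 := by omega
  rw [h1]
  simp only [Nat.add_sub_cancel]
  exact Nat.mul_le_mul_left _ (Nat.descFactorial_le_pow _ _)

private lemma comb_main {X : Type*} (R : Set (Set X)) (d k : ℕ)
    (hVC : ∀ F : Finset X, Shattered R F → F.card ≤ d)
    (F : Finset X)
    (hF : Shattered {S | ∃ s : Fin k → Set X, (∀ i, s i ∈ R) ∧ S = ⋂ i, s i} F) :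
    2 ^ F.card ≤ ((F.card + 1) ^ d + k).choose k := by
  classical
  set T : Finset (Finset X) :=
    F.powerset.filter (fun G => ∃ S ∈ R, (↑F ∩ S : Set X) = ↑G) with hTdef
  have hSauer : T.card ≤ (F.card + 1) ^ d := by
    have h1 : T.card ≤ T.shatterer.card := Finset.card_le_card_shatterer T
    have h2 : T.shatterer ⊆ F.powerset.filter (fun s => s.card ≤ d) := by
      intro s hs
      rw [Finset.mem_shatterer] at hs
      have hsF : s ⊆ F := by
        obtain ⟨u, huT, hsu⟩ := hs (Finset.Subset.refl s)
        have hsu' : s ⊆ u := by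
          rw [Finset.inter_eq_left] at hsu
          exact hsu
        rw [hTdef, Finset.mem_filter, Finset.mem_powerset] at huT
        exact hsu'.trans huT.1
      have hcard : s.card ≤ d := by
        apply hVC s
        intro G hGs
        obtain ⟨u, huT, hsu⟩ := hs hGs
        rw [hTdef, Finset.mem_filter, Finset.mem_powerset] at huT
        obtain ⟨_, S, hSR, hFS⟩ := huT
        refine ⟨S, hSR, ?_⟩
        have hsubF : (↑s : Set X) ⊆ ↑F := Finset.coe_subset.2 hsF
        calc (↑s ∩ S : Set X) = ↑s ∩ (↑F ∩ S) := by
              rw [← Set.inter_assoc, Set.inter_eq_self_of_subset_left hsubF]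
          _ = ↑s ∩ ↑u := by rw [hFS]
          _ = ↑(s ∩ u) := (Finset.coe_inter s u).symm
          _ = ↑G := by rw [hsu]
      rw [Finset.mem_filter, Finset.mem_powerset]
      exact ⟨hsF, hcard⟩
    calc T.card ≤ T.shatterer.card := h1
      _ ≤ (F.powerset.filter (fun s => s.card ≤ d)).card := Finset.card_le_card h2
      _ ≤ ∑ i ∈ Finset.range (d + 1), F.card.choose i :=
          filter_card_le_sum_choose F d _ (fun s h => h)
      _ ≤ (F.card + 1) ^ d := sum_choose_le_pow d F.card
  have key : ∀ G : Finset X, G ⊆ F → ∃ s : Fin k → Set X,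
      (∀ i, s i ∈ R) ∧ (↑F ∩ ⋂ i, s i : Set X) = ↑G := by
    intro G hG
    obtain ⟨S, hS, hFS⟩ := hF G hG
    obtain ⟨s, hs, rfl⟩ := hS
    exact ⟨s, hs, hFS⟩
  choose! s hs1 hs2 using key
  set f : Finset X → Finset (Finset X) :=
    fun G => (Finset.univ : Finset (Fin k)).image (fun i => F.filter (fun a => a ∈ s G i))
    with hfdef
  have hrec : ∀ G, G ⊆ F → G = F.filter (fun a => ∀ u ∈ f G, a ∈ u) := by
    intro G hG
    have h2 := hs2 G hG
    ext a
    simp only [hfdef, Finset.mem_filter, Finset.mem_image, Finset.mem_univ, true_and]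
    constructor
    · intro ha
      have haG : a ∈ (↑G : Set X) := ha
      rw [← h2] at haG
      obtain ⟨haF, haI⟩ := haG
      rw [Set.mem_iInter] at haI
      refine ⟨hG ha, ?_⟩
      rintro u ⟨i, rfl⟩
      rw [Finset.mem_filter]
      exact ⟨hG ha, haI i⟩
    · rintro ⟨haF, hu⟩
      have haG : a ∈ (↑F ∩ ⋂ i, s G i : Set X) := by
        refine ⟨haF, ?_⟩
        rw [Set.mem_iInter]
        intro i
        have := hu (F.filter (fun b => b ∈ s G i)) ⟨i, rfl⟩
        rw [Finset.mem_filter] at this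
        exact this.2
      rw [h2] at haG
      exact haG
  have hinj : Set.InjOn f ↑F.powerset := by
    intro G1 h1 G2 h2 heq
    rw [Finset.mem_coe, Finset.mem_powerset] at h1 h2
    rw [hrec G1 h1, hrec G2 h2, heq]
  have hmaps : ∀ G ∈ F.powerset, f G ∈ T.powerset.filter (fun A => A.card ≤ k) := by
    intro G hG
    rw [Finset.mem_powerset] at hG
    rw [Finset.mem_filter, Finset.mem_powerset]
    constructor
    · intro u hu
      rw [hfdef] at hu
      simp only [Finset.mem_image, Finset.mem_univ, true_and] at hu
      obtain ⟨i, rfl⟩ := hu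
      rw [hTdef, Finset.mem_filter, Finset.mem_powerset]
      refine ⟨Finset.filter_subset _ _, s G i, hs1 G hG i, ?_⟩
      rw [Finset.coe_filter]
      exact Set.sep_mem_eq
    · calc (f G).card ≤ (Finset.univ : Finset (Fin k)).card := Finset.card_image_le
        _ = k := by simp
  have hcount : 2 ^ F.card ≤ (T.powerset.filter (fun A => A.card ≤ k)).card := by
    rw [← Finset.card_powerset]
    exact Finset.card_le_card_of_injOn f hmaps hinj
  calc 2 ^ F.card ≤ (T.powerset.filter (fun A => A.card ≤ k)).card := hcount
    _ ≤ ∑ j ∈ Finset.range (k + 1), T.card.choose j :=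
        filter_card_le_sum_choose T k _ (fun s h => h)
    _ ≤ (T.card + k).choose k := sum_choose_le_add_choose k T.card
    _ ≤ ((F.card + 1) ^ d + k).choose k := Nat.choose_le_choose k (by omega)

end AuxComb

/-- If `(X,R)` has VC-dimension at most `d`, then the family `R_k` of `k`-fold
intersections of ranges from `R` has VC-dimension at most `2dk·log₂(dk)`. -/
theorem vcdim_intersections (X : Type*) (R : Set (Set X)) (d k : ℕ)
    (hd : 1 ≤ d) (hk : 1 ≤ k) (hdk : 2 ≤ d * k)
    (hVC : ∀ F : Finset X, Shattered R F → F.card ≤ d) :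
    ∀ F : Finset X,
      Shattered {S | ∃ s : Fin k → Set X, (∀ i, s i ∈ R) ∧ S = ⋂ i, s i} F →
      (F.card : ℝ) ≤ 2 * d * k * Real.logb 2 (d * k) := by
  intro F hF
  rcases eq_or_lt_of_le hk with hk1 | hk2
  · -- k = 1 : reduces to the hypothesis directly
    have hk1' : k = 1 := hk1.symm
    subst hk1'
    have hd2 : 2 ≤ d := by omega
    have hShat : Shattered R F := by
      intro G hG
      obtain ⟨S, hS, hFS⟩ := hF G hG
      obtain ⟨s, hs, rfl⟩ := hS
      refine ⟨s 0, hs 0, ?_⟩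
      have hiI : (⋂ i : Fin 1, s i) = s 0 := by
        ext y
        simp [Set.mem_iInter, Fin.forall_fin_one]
      rw [← hiI]
      exact hFS
    have hnd := hVC F hShat
    have hcard : (F.card : ℝ) ≤ (d : ℝ) := by exact_mod_cast hnd
    have hd2R : (2 : ℝ) ≤ (d : ℝ) := by exact_mod_cast hd2
    have hlog : (1 : ℝ) ≤ Real.logb 2 ((d : ℝ) * (1 : ℕ)) := by
      have h2 : (2 : ℝ) ≤ (d : ℝ) * (1 : ℕ) := by push_cast; linarith
      have := Real.logb_le_logb_of_le (b := 2) (by norm_num) (by norm_num : (0:ℝ) < 2) h2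
      rwa [Real.logb_self_eq_one (by norm_num)] at this
    push_cast at hlog ⊢
    nlinarith
  · -- k ≥ 2
    have hk2' : 2 ≤ k := hk2
    have hcomb := comb_main R d k hVC F hF
    have H : k.factorial * 2 ^ F.card
        ≤ ((F.card + 1) ^ d + 1) * ((F.card + 1) ^ d + k) ^ (k - 1) := by
      calc k.factorial * 2 ^ F.card
          ≤ k.factorial * (((F.card + 1) ^ d + k).choose k) :=
            Nat.mul_le_mul_left _ hcomb
        _ ≤ ((F.card + 1) ^ d + 1) * ((F.card + 1) ^ d + k) ^ (k - 1) :=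
            fact_mul_choose_le _ k (by omega)
    have := analytic_main d k F.card hd hk2' H
    push_cast at this ⊢
    linarith
end
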